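/- arXiv:1405.4416 — 4 statements merged into one kernel-verified Lean document; each statement's English description precedes it below -/
import Mathlib

section
/- For a mixed binomial process η = δ_{X_1} + ... + δ_{X_κ}, where X_1, X_2, ... are i.i.d. with distribution Q on a measurable space X and κ is an independent Poisson random variable with parameter λ ≥ 0, the Laplace functional satisfies E[exp(-∫ u dη)] = exp(-∫ (1 - e^{-u(x)}) μ(dx)) for every measurable u : X → [0,∞), where μ := λQ. -/
open MeasureTheory ProbabilityTheory ENNReal Filter Topology

noncomputable section

namespace PoissonSurvey

variable {Ω X : Type*} [MeasurableSpace Ω] [MeasurableSpace X]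

/-- A Poisson process on `X` with intensity measure `μ`, defined over the probability
space `(Ω, P)`: a random measure with independent increments whose evaluations are
Poisson distributed (with the convention `∞ · e^{-∞} = 0`, i.e. `η B = ∞` a.s. when
`μ B = ∞`). -/
structure IsPoissonProcess (P : Measure Ω) (η : Ω → Measure X) (μ : Measure X) : Prop where
  measurable_eval : ∀ B : Set X, MeasurableSet B → Measurable fun ω => η ω B
  indep : ∀ (n : ℕ) (B : Fin n → Set X), (∀ i, MeasurableSet (B i)) →
    (Pairwise fun i j => Disjoint (B i) (B j)) →
    iIndepFun (fun i ω => η ω (B i)) P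
  poisson : ∀ B : Set X, MeasurableSet B → μ B < ∞ → ∀ k : ℕ,
    P {ω | η ω B = k} =
      (μ B) ^ k / (Nat.factorial k) * ENNReal.ofReal (Real.exp (-(μ B).toReal))
  ae_top : ∀ B : Set X, MeasurableSet B → μ B = ∞ → ∀ᵐ ω ∂P, η ω B = ∞

/-- `η` is represented as `η = Σ_{n < N} δ_{pts n}` pointwise. -/
def PointRep (η : Ω → Measure X) (N : Ω → ℕ∞) (pts : ℕ → Ω → X) : Prop :=
  ∀ ω, η ω = Measure.sum (fun i : {n : ℕ // (n : ℕ∞) < N ω} => Measure.dirac (pts i ω))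

/-- The factorial measure of the point configuration `(N, pts)`, indexed by a finite
index type `ι`: it sums Dirac measures over injective labellings of `ι` by points of
the configuration. -/
def factMeasure (N : ℕ∞) (pts : ℕ → X) (ι : Type*) [Finite ι] : Measure (ι → X) :=
  Measure.sum
    (fun p : {i : ι → ℕ // Function.Injective i ∧ ∀ j, ((i j : ℕ) : ℕ∞) < N} =>
      Measure.dirac (fun j => pts (p.1 j)))

/-- `pimeas μ n` is the product measure `μ^n` on `Fin n → X`. -/
abbrev pimeas (μ : Measure X) (n : ℕ) : Measure (Fin n → X) := Measure.pi fun _ => μ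

/-- The pathwise `n`-th Wiener–Itô integral of `g` for the point configuration
`(N, pts)` with intensity measure `μ`:
`I_n(g) = Σ_{J ⊆ [n]} (-1)^{n-|J|} ∬ g dη^{(|J|)}(x_J) dμ^{n-|J|}(x_{J^c})`. -/
def WIint (N : ℕ∞) (pts : ℕ → X) (μ : Measure X) (n : ℕ) (g : (Fin n → X) → ℝ) : ℝ :=
  ∑ J : Finset (Fin n), (-1 : ℝ) ^ (n - J.card) *
    ∫ x, g x ∂(Measure.map
      (fun p : ({i // i ∈ J} → X) × ({i // i ∈ Jᶜ} → X) =>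
        fun i => if h : i ∈ J then p.1 ⟨i, h⟩ else p.2 ⟨i, Finset.mem_compl.mpr h⟩)
      ((factMeasure N pts {i // i ∈ J}).prod (Measure.pi fun _ : {i // i ∈ Jᶜ} => μ)))

/-- `lapFun v χ = exp(-χ(v))`, with the convention `exp(-∞) = 0`. -/
def lapFun (v : X → ℝ) (χ : Measure X) : ℝ :=
  if ∫⁻ x, ENNReal.ofReal (v x) ∂χ = ∞ then 0
  else Real.exp (-(∫⁻ x, ENNReal.ofReal (v x) ∂χ).toReal)

/-- The difference operator: `D_x f(χ) = f(χ + δ_x) - f(χ)`. -/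
def diffOp (x : X) (f : Measure X → ℝ) : Measure X → ℝ :=
  fun χ => f (χ + Measure.dirac x) - f χ

/-- Iterated difference operators `D^n_{x_1,…,x_n} f`. -/
def iterDiffOp : (n : ℕ) → (Fin n → X) → (Measure X → ℝ) → Measure X → ℝ
  | 0, _, f => f
  | n + 1, x, f => fun χ =>
      iterDiffOp n (fun i => x i.succ) f (χ + Measure.dirac (x 0)) -
        iterDiffOp n (fun i => x i.succ) f χ

/-- `Tfun P η n f (x_1,…,x_n) = E[D^n_{x_1,…,x_n} f(η)]`. -/
def Tfun (P : Measure Ω) (η : Ω → Measure X) (n : ℕ) (f : Measure X → ℝ) :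
    (Fin n → X) → ℝ :=
  fun x => ∫ ω, iterDiffOp n x f (η ω) ∂P

/-- The symmetrization of a function of `n` variables. -/
def symmFun (n : ℕ) (g : (Fin n → X) → ℝ) : (Fin n → X) → ℝ :=
  fun x => (n.factorial : ℝ)⁻¹ * ∑ π : Equiv.Perm (Fin n), g (x ∘ π)

/-- `I` is a family of Wiener–Itô integral operators for the Poisson process `η`
(with point representation `(N, pts)`) and intensity measure `μ`: it is linear and
continuous (via the isometry relation) on each `L²(μ^n)` and agrees with the explicit
pathwise Wiener–Itô integral on square-integrable functions supported in a power of a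
set of finite intensity measure. -/
structure IsWienerIto (P : Measure Ω) (η : Ω → Measure X) (μ : Measure X)
    (N : Ω → ℕ∞) (pts : ℕ → Ω → X)
    (I : (n : ℕ) → ((Fin n → X) → ℝ) → Ω → ℝ) : Prop where
  const : ∀ c : ℝ, I 0 (fun _ => c) = fun _ => c
  add : ∀ (n : ℕ) (f g : (Fin n → X) → ℝ), MemLp f 2 (pimeas μ n) →
    MemLp g 2 (pimeas μ n) → ∀ᵐ ω ∂P, I n (f + g) ω = I n f ω + I n g ω
  smul : ∀ (n : ℕ) (c : ℝ) (f : (Fin n → X) → ℝ), MemLp f 2 (pimeas μ n) →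
    ∀ᵐ ω ∂P, I n (c • f) ω = c * I n f ω
  isometry : ∀ (m n : ℕ) (f : (Fin m → X) → ℝ) (g : (Fin n → X) → ℝ),
    MemLp f 2 (pimeas μ m) → MemLp g 2 (pimeas μ n) →
    ∫ ω, I m f ω * I n g ω ∂P =
      if h : m = n then
        (m.factorial : ℝ) *
          ∫ x, symmFun m f x * symmFun m (fun y => g (fun i => y (Fin.cast h.symm i))) x
            ∂(pimeas μ m)
      else 0
  pathwise : ∀ (n : ℕ) (f : (Fin n → X) → ℝ) (B : Set X), MeasurableSet B → μ B < ∞ →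
    (∀ x, f x ≠ 0 → ∀ i, x i ∈ B) → MemLp f 2 (pimeas μ n) → Measurable f →
    ∀ᵐ ω ∂P, I n f ω = WIint (N ω) (fun k => pts k ω) μ n f


/-- Laplace functional of a mixed binomial process with Poisson
mixing: if `X₁, X₂, …` are i.i.d. with distribution `Q`, `κ` is an independent
Poisson(`λ`) random variable and `η = δ_{X₁} + ⋯ + δ_{X_κ}`, then for every
measurable `u : X → [0,∞)`,
`E[exp(-∫ u dη)] = exp(-∫ (1 - e^{-u(x)}) μ(dx))` where `μ = λ Q`. -/
theorem laplace_functional_mixed_binomial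
    (P : Measure Ω) [IsProbabilityMeasure P]
    (Q : Measure X) [IsProbabilityMeasure Q]
    (lam : ℝ) (hlam : 0 ≤ lam)
    (Xs : ℕ → Ω → X) (hXm : ∀ i, Measurable (Xs i))
    (hXlaw : ∀ i, Measure.map (Xs i) P = Q)
    (hXiid : iIndepFun Xs P)
    (κ : Ω → ℕ) (hκm : Measurable κ)
    (hκlaw : ∀ k : ℕ, P {ω | κ ω = k} =
      ENNReal.ofReal (lam ^ k / (Nat.factorial k) * Real.exp (-lam)))
    (hindep : IndepFun κ (fun ω i => Xs i ω) P)
    (η : Ω → Measure X)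
    (hη : ∀ ω, η ω = ∑ i ∈ Finset.range (κ ω), Measure.dirac (Xs i ω))
    (u : X → ℝ) (hu : Measurable u) (hu0 : ∀ x, 0 ≤ u x) :
    ∫ ω, Real.exp (-(∑ i ∈ Finset.range (κ ω), u (Xs i ω))) ∂P =
      Real.exp (-(∫ x, (1 - Real.exp (-(u x))) ∂(ENNReal.ofReal lam • Q))) := by
  classical
  -- the one-point factor and its basic properties
  set φ : X → ℝ := fun x => Real.exp (-(u x)) with hφdef
  have hφm : Measurable φ := Real.measurable_exp.comp hu.neg
  have hφ_nonneg : ∀ x, 0 ≤ φ x := fun x => (Real.exp_pos _).le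
  have hφ_le : ∀ x, φ x ≤ 1 := fun x =>
    Real.exp_le_one_iff.2 (neg_nonpos.2 (hu0 x))
  have hφ_int : Integrable φ Q := by
    refine Integrable.mono' (integrable_const 1) hφm.aestronglyMeasurable ?_
    exact ae_of_all _ fun x => by
      rw [Real.norm_eq_abs, abs_of_nonneg (hφ_nonneg x)]; exact hφ_le x
  set cr : ℝ := ∫ x, φ x ∂Q with hcr
  have hcr_nonneg : 0 ≤ cr := integral_nonneg hφ_nonneg
  have hcr_le : cr ≤ 1 := by
    calc cr ≤ ∫ _x, (1 : ℝ) ∂Q := integral_mono hφ_int (integrable_const 1) hφ_le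
    _ = 1 := by simp
  -- the ℝ≥0∞-valued factors
  set h : ℕ → Ω → ℝ≥0∞ := fun i ω => ENNReal.ofReal (φ (Xs i ω)) with hhdef
  have hh_meas : ∀ i, Measurable (h i) := fun i =>
    ENNReal.measurable_ofReal.comp (hφm.comp (hXm i))
  have hcrE : ENNReal.ofReal cr = ∫⁻ x, ENNReal.ofReal (φ x) ∂Q :=
    ofReal_integral_eq_lintegral_ofReal hφ_int (ae_of_all _ hφ_nonneg)
  have hh_int : ∀ i, ∫⁻ ω, h i ω ∂P = ENNReal.ofReal cr := by
    intro i
    have : ∫⁻ ω, h i ω ∂P = ∫⁻ x, ENNReal.ofReal (φ x) ∂(Measure.map (Xs i) P) :=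
      (lintegral_map (ENNReal.measurable_ofReal.comp hφm) (hXm i)).symm
    rw [this, hXlaw i, hcrE]
  have hh_indep : iIndepFun h P :=
    hXiid.comp (fun _ x => ENNReal.ofReal (φ x))
      (fun _ => ENNReal.measurable_ofReal.comp hφm)
  -- product formula for fixed k
  have hprod_meas : ∀ k : ℕ, Measurable fun ω => ∏ i ∈ Finset.range k, h i ω := fun k =>
    Finset.measurable_prod _ fun i _ => hh_meas i
  have hprod : ∀ k : ℕ, ∫⁻ ω, ∏ i ∈ Finset.range k, h i ω ∂P = (ENNReal.ofReal cr) ^ k := by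
    intro k
    induction k with
    | zero => simp
    | succ n ih =>
      have hind : IndepFun (fun ω => ∏ i ∈ Finset.range n, h i ω) (h n) P := by
        have := hh_indep.indepFun_prod_range_succ hh_meas n
        rwa [show (∏ i ∈ Finset.range n, h i) = fun ω => ∏ i ∈ Finset.range n, h i ω from
          funext fun ω => Finset.prod_apply ω _ _] at this
      simp_rw [Finset.prod_range_succ]
      rw [lintegral_mul_eq_lintegral_mul_lintegral_of_indepFun''
        (hprod_meas n).aemeasurable (hh_meas n).aemeasurable hind, ih, hh_int n, pow_succ]
  -- measurability of the main integrand
  have hSmeas : Measurable fun p : (ℕ → X) × ℕ => ∑ i ∈ Finset.range p.2, u (p.1 i) := by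
    apply measurable_from_prod_countable_left
    intro k
    show Measurable fun v : ℕ → X => ∑ i ∈ Finset.range k, u (v i)
    exact Finset.measurable_sum _ fun i _ => hu.comp (measurable_pi_apply i)
  have hfm : Measurable fun ω => Real.exp (-(∑ i ∈ Finset.range (κ ω), u (Xs i ω))) := by
    have : (fun ω => Real.exp (-(∑ i ∈ Finset.range (κ ω), u (Xs i ω)))) =
        fun ω => Real.exp (-((fun p : (ℕ → X) × ℕ => ∑ i ∈ Finset.range p.2, u (p.1 i))
          ((fun i => Xs i ω), κ ω))) := rfl
    rw [this]
    exact Real.measurable_exp.comp ((hSmeas.comp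
      ((measurable_pi_lambda _ fun i => hXm i).prodMk hκm)).neg)
  -- decompose the lintegral according to the value of κ
  set g : Ω → ℝ≥0∞ := fun ω =>
    ENNReal.ofReal (Real.exp (-(∑ i ∈ Finset.range (κ ω), u (Xs i ω)))) with hgdef
  have hg_prod : ∀ ω, g ω = ∏ i ∈ Finset.range (κ ω), h i ω := by
    intro ω
    have : -(∑ i ∈ Finset.range (κ ω), u (Xs i ω)) =
        ∑ i ∈ Finset.range (κ ω), -(u (Xs i ω)) := by
      rw [Finset.sum_neg_distrib]
    rw [hgdef]
    simp only [this, Real.exp_sum]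
    exact ENNReal.ofReal_prod_of_nonneg fun i _ => (Real.exp_pos _).le
  have hsets : ∀ k : ℕ, MeasurableSet {ω | κ ω = k} :=
    fun k => hκm (measurableSet_singleton k)
  have hg_tsum : ∀ ω, g ω = ∑' k : ℕ,
      Set.indicator {ω' | κ ω' = k} (fun ω' => ∏ i ∈ Finset.range k, h i ω') ω := by
    intro ω
    rw [hg_prod ω]
    have hz : ∀ k : ℕ, k ≠ κ ω →
        Set.indicator {ω' | κ ω' = k} (fun ω' => ∏ i ∈ Finset.range k, h i ω') ω = 0 := by
      intro k hk
      exact Set.indicator_of_notMem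
        (show ω ∉ {ω' | κ ω' = k} from fun hm => hk hm.symm) _
    exact ((tsum_eq_single (κ ω) hz).trans
      (Set.indicator_of_mem (show ω ∈ {ω' | κ ω' = κ ω} from rfl) _)).symm
  have hgL : ∫⁻ ω, g ω ∂P = ∑' k : ℕ,
      ∫⁻ ω, Set.indicator {ω' | κ ω' = k} (fun ω' => ∏ i ∈ Finset.range k, h i ω') ω ∂P := by
    rw [lintegral_congr hg_tsum]
    exact lintegral_tsum fun k =>
      ((hprod_meas k).indicator (hsets k)).aemeasurable
  -- compute each term using independence of κ and the Xs
  have hterm : ∀ k : ℕ,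
      ∫⁻ ω, Set.indicator {ω' | κ ω' = k} (fun ω' => ∏ i ∈ Finset.range k, h i ω') ω ∂P =
        P {ω | κ ω = k} * (ENNReal.ofReal cr) ^ k := by
    intro k
    set φ1 : ℕ → ℝ≥0∞ := fun n => if n = k then 1 else 0 with hφ1def
    set φ2 : (ℕ → X) → ℝ≥0∞ := fun v => ∏ i ∈ Finset.range k, ENNReal.ofReal (φ (v i))
      with hφ2def
    have hφ1m : Measurable φ1 := measurable_from_top
    have hφ2m : Measurable φ2 :=
      Finset.measurable_prod _ fun i _ =>
        ENNReal.measurable_ofReal.comp (hφm.comp (measurable_pi_apply i))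
    have hind : IndepFun (fun ω => φ1 (κ ω)) (fun ω => φ2 (fun i => Xs i ω)) P :=
      hindep.comp hφ1m hφ2m
    have heq : ∀ ω,
        Set.indicator {ω' | κ ω' = k} (fun ω' => ∏ i ∈ Finset.range k, h i ω') ω =
          φ1 (κ ω) * φ2 (fun i => Xs i ω) := by
      intro ω
      by_cases hω : κ ω = k
      · rw [Set.indicator_of_mem (show ω ∈ {ω' | κ ω' = k} from hω)]
        simp [hφ1def, hφ2def, hhdef, hω]
      · rw [Set.indicator_of_notMem (show ω ∉ {ω' | κ ω' = k} from hω)]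
        simp [hφ1def, hω]
    rw [lintegral_congr heq,
      lintegral_mul_eq_lintegral_mul_lintegral_of_indepFun''
        (f := fun ω => φ1 (κ ω)) (g := fun ω => φ2 (fun i => Xs i ω))
        (hφ1m.comp hκm).aemeasurable
        (hφ2m.comp (measurable_pi_lambda _ fun i => hXm i)).aemeasurable hind]
    have h1 : ∫⁻ ω, φ1 (κ ω) ∂P = P {ω | κ ω = k} := by
      have he : ∀ ω, φ1 (κ ω) = Set.indicator {ω' | κ ω' = k} (fun _ => (1 : ℝ≥0∞)) ω := by
        intro ω
        by_cases hω : κ ω = k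
        · rw [Set.indicator_of_mem (show ω ∈ {ω' | κ ω' = k} from hω)]; simp [hφ1def, hω]
        · rw [Set.indicator_of_notMem (show ω ∉ {ω' | κ ω' = k} from hω)]; simp [hφ1def, hω]
      rw [lintegral_congr he]
      exact lintegral_indicator_one (μ := P) (hsets k)
    have h2 : ∫⁻ ω, φ2 (fun i => Xs i ω) ∂P = (ENNReal.ofReal cr) ^ k := by
      rw [← hprod k]
    rw [h1, h2]
  -- sum the series
  have hser : Summable fun k : ℕ => Real.exp (-lam) * ((lam * cr) ^ k / k.factorial) :=
    (Real.summable_pow_div_factorial (lam * cr)).mul_left _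
  have hexp_tsum : (∑' k : ℕ, Real.exp (-lam) * ((lam * cr) ^ k / k.factorial)) =
      Real.exp (-lam) * Real.exp (lam * cr) := by
    rw [tsum_mul_left]
    congr 1
    rw [Real.exp_eq_exp_ℝ, NormedSpace.exp_eq_tsum_div]
  have hterm_eq : ∀ k : ℕ,
      P {ω | κ ω = k} * (ENNReal.ofReal cr) ^ k =
        ENNReal.ofReal (Real.exp (-lam) * ((lam * cr) ^ k / k.factorial)) := by
    intro k
    rw [hκlaw k, ← ENNReal.ofReal_pow hcr_nonneg, ← ENNReal.ofReal_mul (by positivity)]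
    congr 1
    rw [mul_pow]
    field_simp
  have hgL' : ∫⁻ ω, g ω ∂P = ENNReal.ofReal (Real.exp (lam * cr - lam)) := by
    rw [hgL]
    simp_rw [hterm, hterm_eq]
    rw [← ENNReal.ofReal_tsum_of_nonneg (fun k => by positivity) hser, hexp_tsum,
      ← Real.exp_add]
    ring_nf
  -- put everything together
  have hLHS : ∫ ω, Real.exp (-(∑ i ∈ Finset.range (κ ω), u (Xs i ω))) ∂P =
      Real.exp (lam * cr - lam) := by
    rw [integral_eq_lintegral_of_nonneg_ae (ae_of_all _ fun ω => (Real.exp_pos _).le)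
      hfm.aestronglyMeasurable]
    rw [show (∫⁻ ω, ENNReal.ofReal (Real.exp (-(∑ i ∈ Finset.range (κ ω), u (Xs i ω)))) ∂P)
        = ∫⁻ ω, g ω ∂P from rfl, hgL', ENNReal.toReal_ofReal (Real.exp_pos _).le]
  have hRHS : ∫ x, (1 - Real.exp (-(u x))) ∂(ENNReal.ofReal lam • Q) = lam * (1 - cr) := by
    rw [integral_smul_measure, ENNReal.toReal_ofReal hlam, smul_eq_mul]
    congr 1
    rw [integral_sub (integrable_const 1) hφ_int]
    simp [hcr]
  rw [hLHS, hRHS]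
  congr 1
  ring

end PoissonSurvey
end
end

section
/- The m-th factorial moment measure of a Poisson process η with σ-finite intensity measure μ equals μ^m: E[η^{(m)}(C)] = μ^m(C) for all measurable C ⊂ X^m. -/
open MeasureTheory ProbabilityTheory ENNReal Filter Topology

noncomputable section

namespace PoissonSurvey

variable {Ω X : Type*} [MeasurableSpace Ω] [MeasurableSpace X]

section AuxCounting


/-- extended cardinality of a type, as an `ℝ≥0∞`-valued tsum of ones. -/
def ecard (α : Type*) : ℝ≥0∞ := ∑' _ : α, (1 : ℝ≥0∞)

/-- descending factorial in `ℝ≥0∞`. -/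
def edesc (c : ℝ≥0∞) (k : ℕ) : ℝ≥0∞ := ∏ t ∈ Finset.range k, (c - t)

lemma ecard_congr {α β : Type*} (e : α ≃ β) : ecard α = ecard β :=
by
  unfold ecard; exact (e.tsum_eq (fun _ => (1:ℝ≥0∞)))

lemma tsum_const_ecard {α : Type*} (c : ℝ≥0∞) : ∑' _ : α, c = ecard α * c := by
  calc ∑' _ : α, c = ∑' _ : α, (1 : ℝ≥0∞) * c := by simp
  _ = ecard α * c := ENNReal.tsum_mul_right

lemma ecard_sigma {α : Type*} (β : α → Type*) :
    ecard (Σ a, β a) = ∑' a, ecard (β a) := ENNReal.tsum_sigma' _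

lemma ecard_unique {α : Type*} [Unique α] : ecard α = 1 := by
  simp [ecard, tsum_eq_single (default : α) (fun b hb => absurd (Subsingleton.elim b default) hb)]

lemma edesc_zero (c : ℝ≥0∞) : edesc c 0 = 1 := by simp [edesc]

lemma edesc_succ_peel (c : ℝ≥0∞) (k : ℕ) : edesc c (k + 1) = c * edesc (c - 1) k := by
  rw [edesc, Finset.prod_range_succ']
  simp only [Nat.cast_zero, tsub_zero, Nat.cast_add, Nat.cast_one]
  rw [mul_comm, edesc]
  congr 1
  refine Finset.prod_congr rfl fun t _ => ?_
  rw [tsub_tsub, add_comm]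

lemma measurable_edesc (k : ℕ) : Measurable fun c : ℝ≥0∞ => edesc c k := by
  unfold edesc
  exact Finset.measurable_prod _ fun t _ => measurable_id.sub measurable_const

lemma edesc_le_pow (c : ℝ≥0∞) (k : ℕ) : edesc c k ≤ c ^ k := by
  calc edesc c k ≤ ∏ _t ∈ Finset.range k, c :=
        Finset.prod_le_prod' fun t _ => tsub_le_self
  _ = c ^ k := by rw [Finset.prod_const, Finset.card_range]

lemma edesc_lt_top {c : ℝ≥0∞} (hc : c ≠ ∞) (k : ℕ) : edesc c k < ∞ :=
  lt_of_le_of_lt (edesc_le_pow c k) (ENNReal.pow_lt_top hc.lt_top)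


lemma ecard_set {α : Type*} (s : Set α) : ecard ↥s = ∑' a : α, s.indicator 1 a :=
  tsum_subtype s 1

lemma ecard_diff_singleton {S : Set ℕ} {s : ℕ} (hs : s ∈ S) :
    ecard ↥(S \ {s}) = ecard ↥S - 1 := by
  have key : ecard ↥S = 1 + ecard ↥(S \ {s}) := by
    rw [ecard_set, ecard_set, ENNReal.tsum_eq_add_tsum_ite s]
    congr 1
    · simp [Set.indicator_of_mem hs]
    · refine tsum_congr fun n => ?_
      by_cases hn : n = s
      · simp [hn]
      · by_cases hnS : n ∈ S <;>
          simp [hn, hnS, Set.indicator_apply, Set.mem_diff]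
  rw [key, ENNReal.add_sub_cancel_left one_ne_top]

lemma card_fiber_succ {ι : Type*} [DecidableEq ι] {m : ℕ} (j : Fin (m + 1) → ι) (l : ι) :
    Fintype.card {i : Fin (m + 1) // j i = l} =
      (if j 0 = l then 1 else 0) + Fintype.card {i : Fin m // j i.succ = l} := by
  rw [Fintype.card_subtype, Fintype.card_subtype, Finset.card_filter, Finset.card_filter,
    Fin.sum_univ_succ]

/-- Peeling off the first coordinate of an injective labelling. -/
def peelEquiv {ι : Type*} (m : ℕ) (S : ι → Set ℕ) (j : Fin (m + 1) → ι) :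
    {p : Fin (m + 1) → ℕ // Function.Injective p ∧ ∀ i, p i ∈ S (j i)} ≃
      Σ s : ↥(S (j 0)), {q : Fin m → ℕ //
        Function.Injective q ∧ ∀ i, q i ∈ S (j i.succ) \ {s.1}} where
  toFun p := ⟨⟨p.1 0, p.2.2 0⟩, fun i => p.1 i.succ,
    fun a b hab => Fin.succ_injective _ (p.2.1 hab),
    fun i => ⟨p.2.2 i.succ, fun h => Fin.succ_ne_zero i (p.2.1 (h : p.1 i.succ = p.1 0))⟩⟩
  invFun x := ⟨Fin.cases x.1.1 (fun i => x.2.1 i), by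
    intro a b hab
    induction a using Fin.cases with
    | zero =>
      induction b using Fin.cases with
      | zero => rfl
      | succ i =>
        simp only [Fin.cases_zero, Fin.cases_succ] at hab
        exact absurd hab.symm (x.2.2.2 i).2
    | succ i =>
      induction b using Fin.cases with
      | zero =>
        simp only [Fin.cases_zero, Fin.cases_succ] at hab
        exact absurd hab (x.2.2.2 i).2
      | succ i' =>
        simp only [Fin.cases_succ] at hab
        exact congrArg Fin.succ (x.2.2.1 hab),
    by
    intro i
    induction i using Fin.cases with
    | zero => simpa using x.1.2
    | succ i => simpa using (x.2.2.2 i).1⟩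
  left_inv p := by
    refine Subtype.ext (funext fun i => ?_)
    induction i using Fin.cases <;> simp
  right_inv x := by
    rcases x with ⟨s, q, hq⟩
    refine Sigma.ext (Subtype.ext ?_) (heq_of_eq (Subtype.ext (funext fun i => ?_))) <;> simp

lemma key_count {ι : Type*} [Fintype ι] [DecidableEq ι] :
    ∀ (m : ℕ) (S : ι → Set ℕ), Pairwise (Function.onFun Disjoint S) → ∀ (j : Fin m → ι),
    ecard {p : Fin m → ℕ // Function.Injective p ∧ ∀ i, p i ∈ S (j i)} =
      ∏ l : ι, edesc (ecard ↥(S l)) (Fintype.card {i // j i = l})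
  | 0, S, hd, j => by
      have hu : Unique {p : Fin 0 → ℕ // Function.Injective p ∧ ∀ i, p i ∈ S (j i)} :=
        ⟨⟨⟨fun i => i.elim0, fun a => a.elim0, fun i => i.elim0⟩⟩,
          fun p => Subtype.ext (funext fun i => i.elim0)⟩
      rw [@ecard_unique _ hu]
      have hcard : ∀ l : ι, Fintype.card {i : Fin 0 // j i = l} = 0 := fun l =>
        Fintype.card_eq_zero
      simp [hcard, edesc_zero]
  | (m + 1), S, hd, j => by
      classical
      set c := ecard ↥(S (j 0)) with hc
      have hstep : ∀ s : ↥(S (j 0)),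
          ecard {q : Fin m → ℕ // Function.Injective q ∧ ∀ i, q i ∈ S (j i.succ) \ {s.1}} =
            edesc (c - 1) (Fintype.card {i : Fin m // j i.succ = j 0}) *
              ∏ l ∈ Finset.univ.erase (j 0),
                edesc (ecard ↥(S l)) (Fintype.card {i : Fin m // j i.succ = l}) := by
        intro s
        have hd' : Pairwise (Function.onFun Disjoint (fun l => S l \ {s.1})) :=
          fun a b hab => ((hd hab).mono Set.diff_subset Set.diff_subset :)
        rw [key_count m _ hd' (fun i => j i.succ)]
        rw [← Finset.mul_prod_erase Finset.univ _ (Finset.mem_univ (j 0))]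
        congr 1
        · rw [ecard_diff_singleton s.2]
        · refine Finset.prod_congr rfl fun l hl => ?_
          have hne : l ≠ j 0 := (Finset.mem_erase.mp hl).1
          have hns : s.1 ∉ S l := fun h =>
            (hd hne).le_bot (⟨h, s.2⟩ : s.1 ∈ S l ∩ S (j 0))
          rw [Set.diff_singleton_eq_self hns]
      rw [ecard_congr (peelEquiv m S j), ecard_sigma]
      rw [tsum_congr hstep, tsum_const_ecard, ← hc]
      rw [← Finset.mul_prod_erase Finset.univ
        (fun l => edesc (ecard ↥(S l)) (Fintype.card {i : Fin (m+1) // j i = l}))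
        (Finset.mem_univ (j 0))]
      rw [← mul_assoc]
      congr 1
      · -- c * edesc (c-1) K' = edesc c (K' + 1) = edesc c (K (j 0))
        rw [← edesc_succ_peel]
        congr 1
        rw [card_fiber_succ j (j 0), if_pos rfl, add_comm]
      · refine Finset.prod_congr rfl fun l hl => ?_
        have hne : j 0 ≠ l := fun h => (Finset.mem_erase.mp hl).1 h.symm
        rw [card_fiber_succ j l, if_neg hne, zero_add]


lemma tsum_indicator_ecard {α : Type*} (Q : α → Prop) :
    ∑' a : α, ({a' : α | Q a'}).indicator 1 a = ecard {a : α // Q a} :=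
  (tsum_subtype _ 1).symm

lemma factMeasure_pi {N : ℕ∞} {pts : ℕ → X} {ι : Type*} [Fintype ι] [DecidableEq ι]
    {A : ι → Set X} (hA : ∀ l, MeasurableSet (A l))
    (hd : Pairwise (Function.onFun Disjoint A)) {m : ℕ} (j : Fin m → ι) :
    factMeasure N pts (Fin m) (Set.univ.pi fun i => A (j i)) =
      ∏ l, edesc (ecard ↥{q : ℕ | ((q : ℕ) : ℕ∞) < N ∧ pts q ∈ A l})
        (Fintype.card {i // j i = l}) := by
  have hmeas : MeasurableSet (Set.univ.pi fun i => A (j i)) :=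
    MeasurableSet.univ_pi fun i => hA (j i)
  rw [factMeasure, Measure.sum_apply _ hmeas]
  have hterm : ∀ p : {p : Fin m → ℕ // Function.Injective p ∧ ∀ i, ((p i : ℕ) : ℕ∞) < N},
      Measure.dirac (fun i => pts (p.1 i)) (Set.univ.pi fun i => A (j i)) =
      ({p' : {p : Fin m → ℕ // Function.Injective p ∧ ∀ i, ((p i : ℕ) : ℕ∞) < N} |
        ∀ i, pts (p'.1 i) ∈ A (j i)}).indicator 1 p := by
    intro p
    classical
    rw [Measure.dirac_apply' _ hmeas, Set.indicator_apply, Set.indicator_apply]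
    simp only [Set.mem_univ_pi, Set.mem_setOf_eq, Pi.one_apply]
  rw [tsum_congr hterm, tsum_indicator_ecard]
  have e1 := Equiv.subtypeSubtypeEquivSubtypeInter
    (fun p : Fin m → ℕ => Function.Injective p ∧ ∀ i, ((p i : ℕ) : ℕ∞) < N)
    (fun p : Fin m → ℕ => ∀ i, pts (p i) ∈ A (j i))
  have e2 : {p : Fin m → ℕ // (Function.Injective p ∧ ∀ i, ((p i : ℕ) : ℕ∞) < N) ∧
        ∀ i, pts (p i) ∈ A (j i)} ≃
      {p : Fin m → ℕ // Function.Injective p ∧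
        ∀ i, p i ∈ {q : ℕ | ((q : ℕ) : ℕ∞) < N ∧ pts q ∈ A (j i)}} :=
    Equiv.subtypeEquivRight fun p => by
      constructor
      · rintro ⟨⟨h1, h2⟩, h3⟩; exact ⟨h1, fun i => ⟨h2 i, h3 i⟩⟩
      · rintro ⟨h1, h2⟩; exact ⟨⟨h1, fun i => (h2 i).1⟩, fun i => (h2 i).2⟩
  rw [ecard_congr (e1.trans e2)]
  have hdS : Pairwise (Function.onFun Disjoint
      (fun l : ι => {q : ℕ | ((q : ℕ) : ℕ∞) < N ∧ pts q ∈ A l})) := by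
    intro a b hab
    refine Set.disjoint_left.mpr fun q hqa hqb => ?_
    exact Set.disjoint_left.mp (hd hab) hqa.2 hqb.2
  exact key_count m _ hdS j

lemma eta_count {η : Ω → Measure X} {N : Ω → ℕ∞} {pts : ℕ → Ω → X}
    (hrep : PointRep η N pts) (ω : Ω) {D : Set X} (hD : MeasurableSet D) :
    η ω D = ecard ↥{q : ℕ | ((q : ℕ) : ℕ∞) < N ω ∧ pts q ω ∈ D} := by
  rw [hrep ω, Measure.sum_apply _ hD]
  have hterm : ∀ i : {n : ℕ // ((n : ℕ) : ℕ∞) < N ω},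
      Measure.dirac (pts i.1 ω) D =
        ({i' : {n : ℕ // ((n : ℕ) : ℕ∞) < N ω} | pts i'.1 ω ∈ D}).indicator 1 i := by
    intro i
    classical
    rw [Measure.dirac_apply' _ hD]
    rw [Set.indicator_apply, Set.indicator_apply]
    simp only [Set.mem_setOf_eq, Pi.one_apply]
  rw [tsum_congr hterm, tsum_indicator_ecard]
  exact ecard_congr (Equiv.subtypeSubtypeEquivSubtypeInter
    (fun n : ℕ => ((n : ℕ) : ℕ∞) < N ω) (fun n : ℕ => pts n ω ∈ D))

lemma factMeasure_eta {η : Ω → Measure X} {N : Ω → ℕ∞} {pts : ℕ → Ω → X}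
    (hrep : PointRep η N pts) (ω : Ω) {ι : Type*} [Fintype ι] [DecidableEq ι]
    {A : ι → Set X} (hA : ∀ l, MeasurableSet (A l))
    (hd : Pairwise (Function.onFun Disjoint A)) {m : ℕ} (j : Fin m → ι) :
    factMeasure (N ω) (fun k => pts k ω) (Fin m) (Set.univ.pi fun i => A (j i)) =
      ∏ l, edesc (η ω (A l)) (Fintype.card {i // j i = l}) := by
  rw [factMeasure_pi hA hd j]
  exact Finset.prod_congr rfl fun l _ => by rw [eta_count hrep ω (hA l)]

lemma factorial_add_eq (d : ℕ) : ∀ k : ℕ, (d + k).factorial = (d + k).descFactorial k * d.factorial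
  | 0 => by simp
  | (k + 1) => by
      have : d + (k + 1) = (d + k) + 1 := by omega
      rw [this, Nat.factorial_succ, Nat.succ_descFactorial_succ, factorial_add_eq d k,
        ← Nat.mul_assoc]

lemma edesc_natCast (c k : ℕ) : edesc (c : ℝ≥0∞) k = (c.descFactorial k : ℝ≥0∞) := by
  rw [Nat.descFactorial_eq_prod_range, Nat.cast_prod, edesc]
  exact Finset.prod_congr rfl fun t _ => (ENNReal.natCast_sub c t).symm

lemma tsum_poisson_pmf {lam : ℝ≥0∞} (hlam : lam ≠ ∞) :
    ∑' c : ℕ, lam ^ c / (Nat.factorial c : ℝ≥0∞) * ENNReal.ofReal (Real.exp (-lam.toReal)) = 1 := by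
  set r : NNReal := lam.toNNReal with hr
  have hlr : lam = (r : ℝ≥0∞) := (ENNReal.coe_toNNReal hlam).symm
  have hterm : ∀ c : ℕ, lam ^ c / (Nat.factorial c : ℝ≥0∞) *
      ENNReal.ofReal (Real.exp (-lam.toReal)) =
      ENNReal.ofReal (ProbabilityTheory.poissonPMFReal r c) := by
    intro c
    have hpmf : ProbabilityTheory.poissonPMFReal r c =
        Real.exp (-(r : ℝ)) * (r : ℝ) ^ c / (Nat.factorial c : ℝ) := rfl
    rw [hpmf, ENNReal.ofReal_div_of_pos (y := (Nat.factorial c : ℝ)) (by positivity),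
      ENNReal.ofReal_mul (p := Real.exp (-(r : ℝ))) (by positivity),
      ENNReal.ofReal_pow (p := (r : ℝ)) (by positivity),
      ENNReal.ofReal_natCast, ENNReal.ofReal_coe_nnreal]
    rw [hlr, ENNReal.coe_toReal, mul_comm, ← mul_div_assoc]
  rw [tsum_congr hterm, ← ENNReal.ofReal_tsum_of_nonneg
    (fun c => ProbabilityTheory.poissonPMFReal_nonneg)
    (ProbabilityTheory.poissonPMFRealSum r).summable,
    (show ∑' n, ProbabilityTheory.poissonPMFReal r n = 1 from
      (ProbabilityTheory.poissonPMFRealSum r).tsum_eq), ENNReal.ofReal_one]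

lemma tsum_desc_pmf {lam : ℝ≥0∞} (hlam : lam ≠ ∞) (k : ℕ) :
    ∑' c : ℕ, (Nat.descFactorial c k : ℝ≥0∞) *
      (lam ^ c / (Nat.factorial c : ℝ≥0∞) * ENNReal.ofReal (Real.exp (-lam.toReal))) =
      lam ^ k := by
  set f : ℕ → ℝ≥0∞ := fun c => (Nat.descFactorial c k : ℝ≥0∞) *
    (lam ^ c / (Nat.factorial c : ℝ≥0∞) * ENNReal.ofReal (Real.exp (-lam.toReal))) with hf
  have hsplit := Summable.sum_add_tsum_nat_add' (f := f) (k := k) ENNReal.summable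
  have hzero : ∑ i ∈ Finset.range k, f i = 0 := by
    refine Finset.sum_eq_zero fun i hi => ?_
    have : Nat.descFactorial i k = 0 :=
      Nat.descFactorial_eq_zero_iff_lt.mpr (Finset.mem_range.mp hi)
    simp [hf, this]
  have hterm : ∀ d : ℕ, f (d + k) = lam ^ k *
      (lam ^ d / (Nat.factorial d : ℝ≥0∞) * ENNReal.ofReal (Real.exp (-lam.toReal))) := by
    intro d
    have hD0 : ((d + k).descFactorial k : ℝ≥0∞) ≠ 0 := by
      simp only [ne_eq, Nat.cast_eq_zero, Nat.descFactorial_eq_zero_iff_lt]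
      omega
    have hDtop : ((d + k).descFactorial k : ℝ≥0∞) ≠ ∞ := ENNReal.natCast_ne_top _
    rw [hf]
    simp only
    rw [factorial_add_eq d k, Nat.cast_mul, pow_add, ← mul_assoc, ← mul_div_assoc,
      ENNReal.mul_div_mul_left _ _ hD0 hDtop, mul_comm (lam ^ d) (lam ^ k), mul_div_assoc,
      mul_assoc]
  rw [← hsplit, hzero, zero_add, tsum_congr hterm, ENNReal.tsum_mul_left,
    tsum_poisson_pmf hlam, mul_one]

section PoissonSide
variable {P : Measure Ω} [IsProbabilityMeasure P] {η : Ω → Measure X} {μ : Measure X}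

lemma measure_union_eta_eq_one (hη : IsPoissonProcess P η μ) {B : Set X}
    (hB : MeasurableSet B) (hfin : μ B < ∞) :
    P (⋃ c : ℕ, {ω | η ω B = (c : ℝ≥0∞)}) = 1 := by
  have hAm : ∀ c : ℕ, MeasurableSet {ω | η ω B = (c : ℝ≥0∞)} := fun c =>
    hη.measurable_eval B hB (measurableSet_singleton _)
  have hdisj : Pairwise (Function.onFun Disjoint (fun c : ℕ => {ω | η ω B = (c : ℝ≥0∞)})) := by
    intro a b hab
    refine Set.disjoint_left.mpr fun ω ha hb => hab ?_
    have : ((a : ℕ) : ℝ≥0∞) = ((b : ℕ) : ℝ≥0∞) := (Set.mem_setOf_eq ▸ ha).symm.trans hb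
    exact_mod_cast this
  rw [measure_iUnion hdisj hAm]
  calc ∑' c : ℕ, P {ω | η ω B = (c : ℝ≥0∞)}
      = ∑' c : ℕ, (μ B) ^ c / (Nat.factorial c : ℝ≥0∞) *
          ENNReal.ofReal (Real.exp (-(μ B).toReal)) :=
        tsum_congr fun c => hη.poisson B hB hfin c
    _ = 1 := tsum_poisson_pmf hfin.ne

lemma ae_eta_lt_top (hη : IsPoissonProcess P η μ) {B : Set X}
    (hB : MeasurableSet B) (hfin : μ B < ∞) : ∀ᵐ ω ∂P, η ω B < ∞ := by
  have hAm : ∀ c : ℕ, MeasurableSet {ω | η ω B = (c : ℝ≥0∞)} := fun c =>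
    hη.measurable_eval B hB (measurableSet_singleton _)
  have hU : MeasurableSet (⋃ c : ℕ, {ω | η ω B = (c : ℝ≥0∞)}) := MeasurableSet.iUnion hAm
  have hUc : P (⋃ c : ℕ, {ω | η ω B = (c : ℝ≥0∞)})ᶜ = 0 := by
    rw [measure_compl hU (measure_ne_top P _), measure_union_eta_eq_one hη hB hfin]
    simp
  rw [ae_iff]
  refine measure_mono_null (fun ω hω => ?_) hUc
  simp only [Set.mem_compl_iff, Set.mem_iUnion, Set.mem_setOf_eq] at hω ⊢
  rintro ⟨c, hc⟩
  exact hω (hc ▸ (ENNReal.natCast_ne_top c).lt_top)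

lemma poisson_moment (hη : IsPoissonProcess P η μ) {B : Set X} (hB : MeasurableSet B)
    (hfin : μ B < ∞) (k : ℕ) :
    ∫⁻ ω, edesc (η ω B) k ∂P = μ B ^ k := by
  classical
  set A : ℕ → Set Ω := fun c => {ω | η ω B = (c : ℝ≥0∞)} with hA
  have hAm : ∀ c, MeasurableSet (A c) := fun c =>
    hη.measurable_eval B hB (measurableSet_singleton _)
  have hdisj : Pairwise (Function.onFun Disjoint A) := by
    intro a b hab
    refine Set.disjoint_left.mpr fun ω ha hb => hab ?_
    have : ((a : ℕ) : ℝ≥0∞) = ((b : ℕ) : ℝ≥0∞) := ha.symm.trans hb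
    exact_mod_cast this
  have hU : MeasurableSet (⋃ c, A c) := MeasurableSet.iUnion hAm
  have hUc : P (⋃ c, A c)ᶜ = 0 := by
    rw [measure_compl hU (measure_ne_top P _), measure_union_eta_eq_one hη hB hfin]
    simp
  rw [← lintegral_add_compl (fun ω => edesc (η ω B) k) hU,
    setLIntegral_measure_zero _ _ hUc, add_zero, lintegral_iUnion hAm hdisj]
  have hterm : ∀ c : ℕ, ∫⁻ ω in A c, edesc (η ω B) k ∂P =
      (Nat.descFactorial c k : ℝ≥0∞) * P (A c) := by
    intro c
    rw [setLIntegral_congr_fun (hAm c)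
      (fun ω (hω : η ω B = (c : ℝ≥0∞)) => by rw [hω, edesc_natCast]),
      setLIntegral_const]
  rw [tsum_congr hterm]
  calc ∑' c : ℕ, (Nat.descFactorial c k : ℝ≥0∞) * P (A c)
      = ∑' c : ℕ, (Nat.descFactorial c k : ℝ≥0∞) * ((μ B) ^ c / (Nat.factorial c : ℝ≥0∞) *
          ENNReal.ofReal (Real.exp (-(μ B).toReal))) :=
        tsum_congr fun c => by rw [hA]; rw [hη.poisson B hB hfin c]
    _ = μ B ^ k := tsum_desc_pmf hfin.ne k

lemma lintegral_prod_fn {n : ℕ} {f : Fin n → Ω → ℝ≥0∞}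
    (hindep : iIndepFun f P) (hmeas : ∀ i, Measurable (f i)) :
    ∫⁻ ω, ∏ i, f i ω ∂P = ∏ i, ∫⁻ ω, f i ω ∂P := by
  classical
  suffices h : ∀ s : Finset (Fin n), ∫⁻ ω, ∏ i ∈ s, f i ω ∂P = ∏ i ∈ s, ∫⁻ ω, f i ω ∂P from
    h Finset.univ
  intro s
  induction s using Finset.induction with
  | empty => simp
  | @insert a s hns ih =>
    have hind2 : IndepFun (f a) (∏ j ∈ s, f j) P :=
      (hindep.indepFun_finset_prod_of_notMem hmeas hns).symm
    have hGmeas : Measurable (∏ j ∈ s, f j) := by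
      rw [Finset.prod_fn]
      exact Finset.measurable_prod s fun j _ => hmeas j
    have key := lintegral_mul_eq_lintegral_mul_lintegral_of_indepFun (hmeas a) hGmeas hind2
    calc ∫⁻ ω, ∏ i ∈ insert a s, f i ω ∂P
        = ∫⁻ ω, (f a * ∏ j ∈ s, f j) ω ∂P := by
          refine lintegral_congr fun ω => ?_
          rw [Finset.prod_insert hns, Pi.mul_apply, Finset.prod_apply]
      _ = (∫⁻ ω, f a ω ∂P) * ∫⁻ ω, (∏ j ∈ s, f j) ω ∂P := key
      _ = (∫⁻ ω, f a ω ∂P) * ∏ j ∈ s, ∫⁻ ω, f j ω ∂P := by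
          rw [← ih]
          exact congrArg _ (lintegral_congr fun ω => Finset.prod_apply _ _ _)
      _ = ∏ i ∈ insert a s, ∫⁻ ω, f i ω ∂P := by rw [Finset.prod_insert hns]

lemma lintegral_prod_edesc (hη : IsPoissonProcess P η μ) {n : ℕ} {B : Fin n → Set X}
    (hB : ∀ l, MeasurableSet (B l)) (hfin : ∀ l, μ (B l) < ∞)
    (hd : Pairwise fun a b => Disjoint (B a) (B b)) (k : Fin n → ℕ) :
    ∫⁻ ω, ∏ l, edesc (η ω (B l)) (k l) ∂P = ∏ l, μ (B l) ^ (k l) := by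
  have hindep := (hη.indep n B hB hd).comp (fun l (c : ℝ≥0∞) => edesc c (k l))
    (fun l => measurable_edesc (k l))
  have h2 := lintegral_prod_fn hindep
    (fun l => (measurable_edesc (k l)).comp (hη.measurable_eval _ (hB l)))
  simp only [Function.comp_apply] at h2
  rw [h2]
  exact Finset.prod_congr rfl fun l _ => poisson_moment hη (hB l) (hfin l) (k l)

end PoissonSide

section Main
variable {P : Measure Ω} [IsProbabilityMeasure P] {η : Ω → Measure X} {μ : Measure X}
  [SigmaFinite μ] {N : Ω → ℕ∞} {pts : ℕ → Ω → X}

lemma prod_pow_card_fiber {n m : ℕ} (j : Fin m → Fin n) (g : Fin n → ℝ≥0∞) :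
    ∏ l : Fin n, g l ^ (Fintype.card {i // j i = l}) = ∏ i : Fin m, g (j i) := by
  classical
  rw [← Finset.prod_fiberwise_of_maps_to' (fun i _ => Finset.mem_univ (j i)) g]
  refine Finset.prod_congr rfl fun l _ => ?_
  rw [Finset.prod_const, Fintype.card_subtype]

lemma lintegral_factMeasure_pi (hη : IsPoissonProcess P η μ) (hrep : PointRep η N pts)
    {n : ℕ} {A : Fin n → Set X} (hA : ∀ l, MeasurableSet (A l)) (hfin : ∀ l, μ (A l) < ∞)
    (hd : Pairwise fun a b => Disjoint (A a) (A b)) {m : ℕ} (j : Fin m → Fin n) :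
    ∫⁻ ω, factMeasure (N ω) (fun k => pts k ω) (Fin m) (Set.univ.pi fun i => A (j i)) ∂P =
      pimeas μ m (Set.univ.pi fun i => A (j i)) := by
  have hpt : ∀ ω, factMeasure (N ω) (fun k => pts k ω) (Fin m)
      (Set.univ.pi fun i => A (j i)) =
      ∏ l, edesc (η ω (A l)) (Fintype.card {i // j i = l}) := fun ω =>
    factMeasure_eta hrep ω hA hd j
  rw [lintegral_congr hpt, lintegral_prod_edesc hη hA hfin hd _, Measure.pi_pi,
    prod_pow_card_fiber j (fun l => μ (A l))]

lemma factMeasure_box (hrep : PointRep η N pts) (ω : Ω) (m : ℕ)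
    {U : Set X} (hU : MeasurableSet U) :
    factMeasure (N ω) (fun k => pts k ω) (Fin m) (Set.univ.pi fun _ : Fin m => U) =
      edesc (η ω U) m := by
  have h := factMeasure_eta (ι := Fin 1) hrep ω (A := fun _ => U) (fun _ => hU)
    (by intro a b hab; exact absurd (Subsingleton.elim a b) hab)
    (fun _ : Fin m => (0 : Fin 1))
  rw [h, Fin.prod_univ_one]
  congr 1
  rw [Fintype.card_congr (Equiv.subtypeUnivEquiv fun i => rfl), Fintype.card_fin]

lemma main_U (hη : IsPoissonProcess P η μ) (hrep : PointRep η N pts) (m : ℕ)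
    {U : Set X} (hU : MeasurableSet U) (hUfin : μ U < ∞) :
    ∀ ⦃C : Set (Fin m → X)⦄, MeasurableSet C →
      AEMeasurable (fun ω => factMeasure (N ω) (fun k => pts k ω) (Fin m)
        (C ∩ Set.univ.pi fun _ => U)) P ∧
      ∫⁻ ω, factMeasure (N ω) (fun k => pts k ω) (Fin m) (C ∩ Set.univ.pi fun _ => U) ∂P =
        pimeas μ m (C ∩ Set.univ.pi fun _ => U) := by
  classical
  have hG : MeasurableSet (Set.univ.pi fun _ : Fin m => U) :=
    MeasurableSet.univ_pi fun _ => hU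
  have hGfin : pimeas μ m (Set.univ.pi fun _ : Fin m => U) ≠ ∞ := by
    rw [Measure.pi_pi]
    simp only [Finset.prod_const, Finset.card_univ, Fintype.card_fin]
    exact ENNReal.pow_ne_top hUfin.ne
  refine MeasurableSpace.induction_on_inter generateFrom_pi.symm isPiSystem_pi ?_ ?_ ?_ ?_
  · -- empty
    simp only [Set.empty_inter, measure_empty]
    exact ⟨aemeasurable_const, by simp⟩
  · -- rectangles
    rintro t ⟨s, hs, rfl⟩
    simp only [Set.mem_univ_pi, Set.mem_setOf_eq] at hs
    have hsm : ∀ i, MeasurableSet (s i) := fun i => by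
      have := hs
      exact this i
    -- atoms
    set n := Fintype.card (Finset (Fin m)) with hn
    set e : Finset (Fin m) ≃ Fin n := Fintype.equivFin _ with he
    set atom : Fin n → Set X :=
      fun l => {x | x ∈ U ∧ ∀ i, (x ∈ s i ↔ i ∈ e.symm l)} with hatom
    have hatomM : ∀ l, MeasurableSet (atom l) := by
      intro l
      have : atom l = U ∩ ⋂ i, (if i ∈ e.symm l then s i else (s i)ᶜ) := by
        ext x
        simp only [hatom, Set.mem_setOf_eq, Set.mem_inter_iff, Set.mem_iInter]
        refine and_congr_right fun _ => forall_congr' fun i => ?_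
        by_cases hi : i ∈ e.symm l <;> simp [hi]
      rw [this]
      exact hU.inter (MeasurableSet.iInter fun i => by
        by_cases hi : i ∈ e.symm l <;> simp only [hi, if_true, if_false]
        · exact hsm i
        · exact (hsm i).compl)
    have hatomsub : ∀ l, atom l ⊆ U := fun l x hx => hx.1
    have hatomfin : ∀ l, μ (atom l) < ∞ := fun l =>
      lt_of_le_of_lt (measure_mono (hatomsub l)) hUfin
    have hatomdisj : Pairwise fun a b => Disjoint (atom a) (atom b) := by
      intro a b hab
      refine Set.disjoint_left.mpr fun x hxa hxb => hab ?_
      have : e.symm a = e.symm b := Finset.ext fun i => by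
        rw [← hxa.2 i, hxb.2 i]
      exact e.symm.injective this
    set J : Finset (Fin m → Fin n) :=
      Finset.univ.filter (fun j => ∀ i, i ∈ e.symm (j i)) with hJ
    have hdecomp : (Set.univ.pi fun i => s i ∩ U) =
        ⋃ j ∈ J, Set.univ.pi (fun i => atom (j i)) := by
      ext x
      simp only [Set.mem_univ_pi, Set.mem_iUnion, Set.mem_inter_iff]
      constructor
      · intro hx
        refine ⟨fun i => e (Finset.univ.filter (fun i' => x i ∈ s i')), ?_, ?_⟩
        · rw [hJ]
          simp only [Finset.mem_filter, Finset.mem_univ, true_and]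
          intro i
          rw [e.symm_apply_apply]
          simp only [Finset.mem_filter, Finset.mem_univ, true_and]
          exact (hx i).1
        · intro i
          refine ⟨(hx i).2, fun i' => ?_⟩
          rw [e.symm_apply_apply]
          simp only [Finset.mem_filter, Finset.mem_univ, true_and]
      · rintro ⟨j, hjJ, hx⟩
        intro i
        have hij : i ∈ e.symm (j i) := by
          rw [hJ] at hjJ
          simp only [Finset.mem_filter, Finset.mem_univ, true_and] at hjJ
          exact hjJ i
        exact ⟨((hx i).2 i).mpr hij, (hx i).1⟩
    have hpairJ : (J : Set (Fin m → Fin n)).PairwiseDisjoint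
        (fun j => Set.univ.pi (fun i => atom (j i))) := by
      intro j _ j' _ hne
      obtain ⟨i0, hi0⟩ := Function.ne_iff.mp hne
      refine Set.disjoint_left.mpr fun x hx hx' => ?_
      exact Set.disjoint_left.mp (hatomdisj hi0) (hx i0 (Set.mem_univ _))
        (hx' i0 (Set.mem_univ _))
    have hpiM : ∀ j : Fin m → Fin n,
        MeasurableSet (Set.univ.pi (fun i => atom (j i))) := fun j =>
      MeasurableSet.univ_pi fun i => hatomM (j i)
    have hinter : Set.univ.pi s ∩ (Set.univ.pi fun _ : Fin m => U) =
        Set.univ.pi fun i => s i ∩ U := (Set.pi_inter_distrib).symm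
    have hfun : (fun ω => factMeasure (N ω) (fun k => pts k ω) (Fin m)
        (Set.univ.pi s ∩ Set.univ.pi fun _ : Fin m => U)) =
        fun ω => ∑ j ∈ J, ∏ l, edesc (η ω (atom l)) (Fintype.card {i // j i = l}) := by
      funext ω
      rw [hinter, hdecomp, measure_biUnion_finset hpairJ (fun j _ => hpiM j)]
      exact Finset.sum_congr rfl fun j _ => factMeasure_eta hrep ω hatomM hatomdisj j
    have hmj : ∀ j : Fin m → Fin n, Measurable fun ω =>
        ∏ l, edesc (η ω (atom l)) (Fintype.card {i // j i = l}) := fun j =>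
      Finset.measurable_prod _ fun l _ =>
        (measurable_edesc _).comp (hη.measurable_eval _ (hatomM l))
    constructor
    · rw [hfun]
      exact (Finset.measurable_sum J fun j _ => hmj j).aemeasurable
    · rw [hfun, lintegral_finset_sum J
        (f := fun j ω => ∏ l, edesc (η ω (atom l)) (Fintype.card {i // j i = l}))
        (fun j _ => hmj j)]
      have hterm : ∀ j ∈ J, ∫⁻ ω, ∏ l, edesc (η ω (atom l))
          (Fintype.card {i // j i = l}) ∂P =
          pimeas μ m (Set.univ.pi (fun i => atom (j i))) := by
        intro j _
        have := lintegral_factMeasure_pi hη hrep hatomM hatomfin hatomdisj j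
        rw [← this]
        refine lintegral_congr fun ω => ?_
        rw [factMeasure_eta hrep ω hatomM hatomdisj j]
      rw [Finset.sum_congr rfl hterm,
        ← measure_biUnion_finset hpairJ (fun j _ => hpiM j), ← hdecomp, hinter]
  · -- complement
    rintro t ht ⟨hmeas_t, hint_t⟩
    have hae : ∀ᵐ ω ∂P, η ω U < ∞ := ae_eta_lt_top hη hU hUfin
    have hsetid : tᶜ ∩ (Set.univ.pi fun _ : Fin m => U) =
        (Set.univ.pi fun _ : Fin m => U) \ (t ∩ Set.univ.pi fun _ : Fin m => U) := by
      ext x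
      simp only [Set.mem_inter_iff, Set.mem_compl_iff, Set.mem_diff]
      tauto
    have haeq : ∀ᵐ ω ∂P, factMeasure (N ω) (fun k => pts k ω) (Fin m)
        (tᶜ ∩ Set.univ.pi fun _ : Fin m => U) =
        edesc (η ω U) m - factMeasure (N ω) (fun k => pts k ω) (Fin m)
          (t ∩ Set.univ.pi fun _ : Fin m => U) := by
      filter_upwards [hae] with ω hω
      have hfin1 : factMeasure (N ω) (fun k => pts k ω) (Fin m)
          (t ∩ Set.univ.pi fun _ : Fin m => U) ≠ ∞ := by
        refine ne_top_of_le_ne_top (edesc_lt_top hω.ne m).ne ?_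
        rw [← factMeasure_box hrep ω m hU]
        exact measure_mono Set.inter_subset_right
      rw [hsetid, measure_diff Set.inter_subset_right
        ((ht.inter hG).nullMeasurableSet) hfin1, factMeasure_box hrep ω m hU]
    have haemble : AEMeasurable (fun ω => edesc (η ω U) m -
        factMeasure (N ω) (fun k => pts k ω) (Fin m)
          (t ∩ Set.univ.pi fun _ : Fin m => U)) P :=
      (((measurable_edesc m).comp (hη.measurable_eval U hU)).aemeasurable).sub hmeas_t
    have hle : ∀ᵐ ω ∂P, factMeasure (N ω) (fun k => pts k ω) (Fin m)
        (t ∩ Set.univ.pi fun _ : Fin m => U) ≤ edesc (η ω U) m := by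
      refine ae_of_all _ fun ω => ?_
      rw [← factMeasure_box hrep ω m hU]
      exact measure_mono Set.inter_subset_right
    have hfinint : ∫⁻ ω, factMeasure (N ω) (fun k => pts k ω) (Fin m)
        (t ∩ Set.univ.pi fun _ : Fin m => U) ∂P ≠ ∞ := by
      rw [hint_t]
      exact fun h => hGfin (eq_top_iff.mpr (h ▸ measure_mono Set.inter_subset_right))
    refine ⟨haemble.congr (haeq.mono fun ω h => h.symm), ?_⟩
    · rw [lintegral_congr_ae haeq]
      rw [lintegral_sub' hmeas_t hfinint hle]
      rw [poisson_moment hη hU hUfin m, hint_t]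
      rw [hsetid]
      rw [measure_diff Set.inter_subset_right ((ht.inter hG).nullMeasurableSet)
        (fun h => hGfin (eq_top_iff.mpr (h ▸ measure_mono Set.inter_subset_right)))]
      congr 1
      rw [Measure.pi_pi]
      simp only [Finset.prod_const, Finset.card_univ, Fintype.card_fin]
  · -- iUnion
    intro f hdisj hfm hind
    have hsetid : (⋃ k, f k) ∩ (Set.univ.pi fun _ : Fin m => U) =
        ⋃ k, (f k ∩ Set.univ.pi fun _ : Fin m => U) := Set.iUnion_inter _ f
    have hdisj' : Pairwise (Function.onFun Disjoint
        fun k => f k ∩ Set.univ.pi fun _ : Fin m => U) := fun a b hab =>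
      ((hdisj hab).mono Set.inter_subset_left Set.inter_subset_left :)
    have hm' : ∀ k, MeasurableSet (f k ∩ Set.univ.pi fun _ : Fin m => U) := fun k =>
      (hfm k).inter hG
    have hfun : (fun ω => factMeasure (N ω) (fun k => pts k ω) (Fin m)
        ((⋃ k, f k) ∩ Set.univ.pi fun _ : Fin m => U)) =
        fun ω => ∑' k, factMeasure (N ω) (fun k' => pts k' ω) (Fin m)
          (f k ∩ Set.univ.pi fun _ : Fin m => U) := by
      funext ω
      rw [hsetid, measure_iUnion hdisj' hm']
    refine ⟨?_, ?_⟩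
    · rw [hfun]
      exact AEMeasurable.ennreal_tsum fun k => (hind k).1
    · rw [hfun, lintegral_tsum fun k => (hind k).1]
      rw [tsum_congr fun k => (hind k).2, hsetid, measure_iUnion hdisj' hm']

end Main

end AuxCounting

/-- The `m`-th factorial moment measure of a Poisson process `η`
with σ-finite intensity measure `μ` equals `μ^m`:
`E[η^{(m)}(C)] = μ^m(C)` for all measurable `C ⊆ X^m`. -/
theorem factorial_moment_measure
    (P : Measure Ω) [IsProbabilityMeasure P]
    (η : Ω → Measure X) (μ : Measure X) [SigmaFinite μ]
    (hη : IsPoissonProcess P η μ)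
    (N : Ω → ℕ∞) (pts : ℕ → Ω → X) (hrep : PointRep η N pts)
    (m : ℕ) (C : Set (Fin m → X)) (hC : MeasurableSet C) :
    ∫⁻ ω, factMeasure (N ω) (fun k => pts k ω) (Fin m) C ∂P = pimeas μ m C := by
  classical
  set G : ℕ → Set (Fin m → X) := fun q => Set.univ.pi fun _ : Fin m => spanningSets μ q
    with hGdef
  have hmono : Monotone fun q => C ∩ G q := by
    intro q q' hqq' x hx
    exact ⟨hx.1, fun i hi => monotone_spanningSets μ hqq' (hx.2 i hi)⟩
  have hcup : ⋃ q, (C ∩ G q) = C := by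
    rw [← Set.inter_iUnion]
    suffices h : ⋃ q, G q = Set.univ by rw [h, Set.inter_univ]
    ext x
    simp only [Set.mem_iUnion, Set.mem_univ, iff_true]
    have hx : ∀ i, ∃ q, x i ∈ spanningSets μ q := fun i => by
      have : x i ∈ ⋃ q, spanningSets μ q := by
        rw [iUnion_spanningSets]; exact Set.mem_univ _
      exact Set.mem_iUnion.mp this
    choose q hq using hx
    exact ⟨Finset.univ.sup q, fun i _ =>
      monotone_spanningSets μ (Finset.le_sup (Finset.mem_univ i)) (hq i)⟩
  have hmain : ∀ q : ℕ,
      AEMeasurable (fun ω => factMeasure (N ω) (fun k => pts k ω) (Fin m) (C ∩ G q)) P ∧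
      ∫⁻ ω, factMeasure (N ω) (fun k => pts k ω) (Fin m) (C ∩ G q) ∂P =
        pimeas μ m (C ∩ G q) := fun q =>
    main_U hη hrep m (measurableSet_spanningSets μ q) (measure_spanningSets_lt_top μ q) hC
  have hdir : Directed (· ⊆ ·) fun q => C ∩ G q := hmono.directed_le
  have hpt : ∀ ω : Ω, factMeasure (N ω) (fun k => pts k ω) (Fin m) C =
      ⨆ q, factMeasure (N ω) (fun k => pts k ω) (Fin m) (C ∩ G q) := by
    intro ω
    conv_lhs => rw [← hcup]
    exact hdir.measure_iUnion (μ := factMeasure (N ω) (fun k => pts k ω) (Fin m))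
  rw [lintegral_congr hpt, lintegral_iSup' (fun q => (hmain q).1)
    (ae_of_all _ fun ω q q' h => measure_mono (hmono h))]
  calc ⨆ q, ∫⁻ ω, factMeasure (N ω) (fun k => pts k ω) (Fin m) (C ∩ G q) ∂P
      = ⨆ q, pimeas μ m (C ∩ G q) := iSup_congr fun q => (hmain q).2
    _ = pimeas μ m C := by
        conv_rhs => rw [← hcup]
        exact (hdir.measure_iUnion (μ := pimeas μ m)).symm

end PoissonSurvey
end
end

section
/- For f(χ) := exp(-χ(v)) with v : X → [0,∞) measurable, bounded and vanishing outside a set of finite μ-measure, the operators T_n satisfy T_n f = exp(-μ(1 - e^{-v})) · (e^{-v} - 1)^{⊗n}, i.e., E[D^n_{x_1,...,x_n} f(η)] = exp(-∫(1-e^{-v}) dμ) ∏_{i=1}^n (e^{-v(x_i)} - 1). -/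
open MeasureTheory ProbabilityTheory ENNReal Filter Topology

noncomputable section

namespace PoissonSurvey

variable {Ω X : Type*} [MeasurableSpace Ω] [MeasurableSpace X]

/-! ### Auxiliary development -/

section Aux

/-- `expNeg t = e^{-t}` with the convention `e^{-∞} = 0`. -/
def expNeg (t : ℝ≥0∞) : ℝ := if t = ∞ then 0 else Real.exp (-t.toReal)

lemma expNeg_nonneg (t : ℝ≥0∞) : 0 ≤ expNeg t := by
  unfold expNeg; split <;> [rfl; exact (Real.exp_pos _).le]

lemma expNeg_le_one (t : ℝ≥0∞) : expNeg t ≤ 1 := by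
  unfold expNeg; split
  · exact zero_le_one
  · exact Real.exp_le_one_iff.mpr (neg_nonpos.mpr ENNReal.toReal_nonneg)

lemma abs_expNeg_le_one (t : ℝ≥0∞) : |expNeg t| ≤ 1 := by
  rw [abs_of_nonneg (expNeg_nonneg t)]; exact expNeg_le_one t

lemma expNeg_zero : expNeg 0 = 1 := by simp [expNeg]

lemma expNeg_of_ne_top {t : ℝ≥0∞} (ht : t ≠ ∞) : expNeg t = Real.exp (-t.toReal) :=
  if_neg ht

lemma expNeg_top : expNeg ∞ = 0 := if_pos rfl

lemma expNeg_add (a b : ℝ≥0∞) : expNeg (a + b) = expNeg a * expNeg b := by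
  by_cases ha : a = ∞
  · simp [ha, expNeg_top, expNeg]
  by_cases hb : b = ∞
  · simp [hb, expNeg_top, expNeg]
  rw [expNeg_of_ne_top ha, expNeg_of_ne_top hb,
    expNeg_of_ne_top (by simp [ha, hb, ENNReal.add_ne_top]),
    ENNReal.toReal_add ha hb, neg_add, Real.exp_add]

lemma expNeg_sum {ι : Type*} (s : Finset ι) (f : ι → ℝ≥0∞) :
    expNeg (∑ i ∈ s, f i) = ∏ i ∈ s, expNeg (f i) := by
  classical
  induction s using Finset.induction_on with
  | empty => simp [expNeg_zero]
  | insert _ _ h ih => rw [Finset.sum_insert h, Finset.prod_insert h, expNeg_add, ih]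

lemma measurable_expNeg : Measurable expNeg := by
  unfold expNeg
  exact Measurable.ite (measurableSet_singleton ∞) measurable_const
    (Real.continuous_exp.measurable.comp ENNReal.measurable_toReal.neg)

lemma lapFun_eq (v : X → ℝ) (χ : Measure X) :
    lapFun v χ = expNeg (∫⁻ x, ENNReal.ofReal (v x) ∂χ) := rfl

lemma lapFun_add_dirac {v : X → ℝ} (hvm : Measurable v) (hv0 : ∀ x, 0 ≤ v x)
    (χ : Measure X) (y : X) :
    lapFun v (χ + Measure.dirac y) = Real.exp (-(v y)) * lapFun v χ := by
  rw [lapFun_eq, lapFun_eq, lintegral_add_measure,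
    lintegral_dirac' _ hvm.ennreal_ofReal, expNeg_add, mul_comm,
    expNeg_of_ne_top ENNReal.ofReal_ne_top, ENNReal.toReal_ofReal (hv0 y)]

lemma iterDiffOp_lapFun {v : X → ℝ} (hvm : Measurable v) (hv0 : ∀ x, 0 ≤ v x) :
    ∀ (n : ℕ) (x : Fin n → X) (χ : Measure X),
      iterDiffOp n x (lapFun v) χ =
        lapFun v χ * ∏ i : Fin n, (Real.exp (-(v (x i))) - 1) := by
  intro n
  induction n with
  | zero => intro x χ; simp [iterDiffOp]
  | succ n ih =>
    intro x χ
    show iterDiffOp n (fun i => x i.succ) (lapFun v) (χ + Measure.dirac (x 0)) -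
        iterDiffOp n (fun i => x i.succ) (lapFun v) χ = _
    rw [ih, ih, lapFun_add_dirac hvm hv0, Fin.prod_univ_succ]
    ring

end Aux

section Poisson

variable {P : Measure Ω} {η : Ω → Measure X} {μ : Measure X}

/-- The total mass of a Poisson distribution on a finite-intensity set is `1`. -/
lemma tsum_poisson (hη : IsPoissonProcess P η μ) {A : Set X} (hA : MeasurableSet A)
    (hAfin : μ A < ∞) :
    ∑' k : ℕ, P {ω | η ω A = k} = 1 := by
  have hμA : μ A = ENNReal.ofReal ((μ A).toReal) := (ENNReal.ofReal_toReal hAfin.ne).symm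
  set lam := (μ A).toReal with hlam
  have hlam0 : 0 ≤ lam := ENNReal.toReal_nonneg
  have hterm : ∀ k : ℕ, P {ω | η ω A = k} = ENNReal.ofReal (lam ^ k / (Nat.factorial k)
      * Real.exp (-lam)) := by
    intro k
    rw [hη.poisson A hA hAfin k, ENNReal.ofReal_mul (by positivity)]
    congr 1
    rw [hμA, ← ENNReal.ofReal_pow hlam0, ENNReal.ofReal_div_of_pos
      (by exact_mod_cast Nat.factorial_pos k)]
    norm_num
  have hsum : Summable (fun k : ℕ => lam ^ k / (Nat.factorial k) * Real.exp (-lam)) :=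
    (Real.summable_pow_div_factorial lam).mul_right _
  calc ∑' k : ℕ, P {ω | η ω A = k}
      = ∑' k : ℕ, ENNReal.ofReal (lam ^ k / (Nat.factorial k) * Real.exp (-lam)) := by
        exact tsum_congr hterm
    _ = ENNReal.ofReal (∑' k : ℕ, lam ^ k / (Nat.factorial k) * Real.exp (-lam)) :=
        (ENNReal.ofReal_tsum_of_nonneg (fun k => by positivity) hsum).symm
    _ = 1 := by
        rw [tsum_mul_right, ((Real.exp_eq_exp_ℝ ▸
          NormedSpace.expSeries_div_hasSum_exp lam :
            HasSum (fun k : ℕ => lam ^ k / (Nat.factorial k)) (Real.exp lam))).tsum_eq,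
          ← Real.exp_add]
        simp

lemma measurableSet_eval_eq (hη : IsPoissonProcess P η μ) {A : Set X}
    (hA : MeasurableSet A) (c : ℝ≥0∞) : MeasurableSet {ω | η ω A = c} :=
  hη.measurable_eval A hA (measurableSet_singleton c)

/-- A.s. the Poisson process gives finite and integer mass to a finite-intensity set. -/
lemma ae_mem_iUnion (hη : IsPoissonProcess P η μ) [IsProbabilityMeasure P] {A : Set X}
    (hA : MeasurableSet A) (hAfin : μ A < ∞) :
    ∀ᵐ ω ∂P, ω ∈ ⋃ k : ℕ, {ω | η ω A = k} := by
  have hmeas : ∀ k : ℕ, MeasurableSet {ω | η ω A = (k : ℕ)} := fun k =>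
    measurableSet_eval_eq hη hA _
  have hdisj : Pairwise (Function.onFun Disjoint fun k : ℕ => {ω | η ω A = (k : ℕ)}) := by
    intro i j hij
    refine Set.disjoint_left.mpr fun ω hi hj => hij ?_
    have : ((i : ℕ) : ℝ≥0∞) = (j : ℕ) := by
      rw [← Set.mem_setOf_eq.mp hi, ← Set.mem_setOf_eq.mp hj]
    exact_mod_cast this
  have hU : P (⋃ k : ℕ, {ω | η ω A = k}) = 1 := by
    rw [measure_iUnion hdisj hmeas, tsum_poisson hη hA hAfin]
  have := prob_compl_eq_zero_iff (MeasurableSet.iUnion hmeas) |>.mpr hU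
  rw [ae_iff]
  convert this using 2
  rfl

lemma ae_eval_lt_top (hη : IsPoissonProcess P η μ) [IsProbabilityMeasure P] {A : Set X}
    (hA : MeasurableSet A) (hAfin : μ A < ∞) :
    ∀ᵐ ω ∂P, η ω A < ∞ := by
  filter_upwards [ae_mem_iUnion hη hA hAfin] with ω hω
  obtain ⟨k, hk⟩ := Set.mem_iUnion.mp hω
  rw [Set.mem_setOf_eq.mp hk]
  exact ENNReal.natCast_lt_top k

/-- Laplace transform of the Poisson variable `η ω A` at a single set. -/
lemma integral_expNeg_single (hη : IsPoissonProcess P η μ) [IsProbabilityMeasure P]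
    {A : Set X} (hA : MeasurableSet A) {c : ℝ≥0∞} (hc : c ≠ ∞)
    (hfin : c ≠ 0 → μ A < ∞) :
    ∫ ω, expNeg (c * η ω A) ∂P =
      Real.exp (-((μ A).toReal * (1 - Real.exp (-c.toReal)))) := by
  by_cases hc0 : c = 0
  · simp [hc0, expNeg_zero]
  have hAfin : μ A < ∞ := hfin hc0
  set lam := (μ A).toReal with hlam
  have hmeasA := hη.measurable_eval A hA
  have hfm : Measurable fun ω => expNeg (c * η ω A) :=
    measurable_expNeg.comp (hmeasA.const_mul c)
  have hint : Integrable (fun ω => expNeg (c * η ω A)) P :=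
    ⟨hfm.aestronglyMeasurable, HasFiniteIntegral.of_bounded (C := 1)
      (Filter.Eventually.of_forall fun ω => by
        rw [Real.norm_eq_abs]; exact abs_expNeg_le_one _)⟩
  set s : ℕ → Set Ω := fun k => {ω | η ω A = k} with hs
  have hmeas : ∀ k : ℕ, MeasurableSet (s k) := fun k => measurableSet_eval_eq hη hA _
  have hdisj : Pairwise (Function.onFun Disjoint s) := by
    intro i j hij
    refine Set.disjoint_left.mpr fun ω hi hj => hij ?_
    have : ((i : ℕ) : ℝ≥0∞) = (j : ℕ) := by
      rw [← Set.mem_setOf_eq.mp hi, ← Set.mem_setOf_eq.mp hj]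
    exact_mod_cast this
  -- restrict the integral to the union
  have hae : ∀ᵐ ω ∂P, ω ∈ ⋃ k, s k := ae_mem_iUnion hη hA hAfin
  have hcongr : (fun ω => expNeg (c * η ω A)) =ᵐ[P]
      (⋃ k, s k).indicator (fun ω => expNeg (c * η ω A)) := by
    filter_upwards [hae] with ω hω
    rw [Set.indicator_of_mem hω]
  rw [integral_congr_ae hcongr, integral_indicator (MeasurableSet.iUnion hmeas),
    integral_iUnion hmeas hdisj hint.integrableOn]
  -- compute each summand
  have hsk : ∀ k : ℕ, ∫ ω in s k, expNeg (c * η ω A) ∂P =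
      (lam ^ k / (Nat.factorial k) * Real.exp (-lam)) * Real.exp (-c.toReal) ^ k := by
    intro k
    have h1 : ∀ ω ∈ s k, expNeg (c * η ω A) = Real.exp (-c.toReal) ^ k := by
      intro ω hω
      rw [Set.mem_setOf_eq.mp hω, expNeg_of_ne_top
        (ENNReal.mul_ne_top hc (ENNReal.natCast_ne_top k)), ENNReal.toReal_mul,
        ENNReal.toReal_natCast, ← Real.exp_nat_mul]
      ring_nf
    rw [setIntegral_congr_fun (hmeas k) h1, setIntegral_const]
    have hPsk : (P (s k)).toReal = lam ^ k / (Nat.factorial k) * Real.exp (-lam) := by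
      rw [hs]
      simp only []
      rw [hη.poisson A hA hAfin k, ENNReal.toReal_mul, ENNReal.toReal_div,
        ENNReal.toReal_pow, ENNReal.toReal_ofReal (Real.exp_pos _).le,
        ENNReal.toReal_natCast]
    rw [measureReal_def, hPsk, smul_eq_mul]
  rw [tsum_congr hsk]
  -- sum the series
  have hsum : HasSum (fun k : ℕ => (lam * Real.exp (-c.toReal)) ^ k / (Nat.factorial k))
      (Real.exp (lam * Real.exp (-c.toReal))) :=
    Real.exp_eq_exp_ℝ ▸ NormedSpace.expSeries_div_hasSum_exp (𝔸 := ℝ) _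
  have hsum2 : HasSum (fun k : ℕ =>
      lam ^ k / (Nat.factorial k) * Real.exp (-lam) * Real.exp (-c.toReal) ^ k)
      (Real.exp (-lam) * Real.exp (lam * Real.exp (-c.toReal))) := by
    refine (hsum.mul_left (Real.exp (-lam))).congr_fun fun k => ?_
    rw [mul_pow]
    ring
  rw [hsum2.tsum_eq, ← Real.exp_add]
  congr 1
  ring

end Poisson

section Product

variable {P : Measure Ω} {η : Ω → Measure X} {μ : Measure X}

/-- The integral of a finite product of independent bounded random variables. -/
lemma integral_finset_prod_of_iIndep {m : ℕ} {g : Fin m → Ω → ℝ}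
    [IsProbabilityMeasure P]
    (hindep : iIndepFun g P)
    (hgm : ∀ j, Measurable (g j)) (s : Finset (Fin m)) :
    ∫ ω, ∏ j ∈ s, g j ω ∂P = ∏ j ∈ s, ∫ ω, g j ω ∂P := by
  classical
  induction s using Finset.induction_on with
  | empty => simp
  | @insert i s hi ih =>
    have hIndep : IndepFun (∏ j ∈ s, g j) (g i) P :=
      iIndepFun.indepFun_finset_prod_of_notMem hindep hgm hi
    have hpm : Measurable (∏ j ∈ s, g j) := by
      rw [Finset.prod_fn]
      exact Finset.measurable_prod s fun j _ => hgm j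
    have hmul : (fun ω => ∏ j ∈ insert i s, g j ω) = (∏ j ∈ s, g j) * g i := by
      funext ω
      simp only [Finset.prod_insert hi, Pi.mul_apply, Finset.prod_apply]
      ring
    rw [hmul, hIndep.integral_mul_eq_mul_integral hpm.aestronglyMeasurable (hgm i).aestronglyMeasurable,
      Finset.prod_insert hi]
    have h2 : integral P (∏ j ∈ s, g j) = ∫ ω, ∏ j ∈ s, g j ω ∂P := by
      congr 1
      funext ω
      exact Finset.prod_apply ω s g
    rw [h2, ih]
    ring

lemma integral_prod_expNeg (hη : IsPoissonProcess P η μ) [IsProbabilityMeasure P]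
    {m : ℕ} {A : Fin m → Set X} (hA : ∀ j, MeasurableSet (A j))
    (hdisj : Pairwise fun i j => Disjoint (A i) (A j))
    {c : Fin m → ℝ≥0∞} (hc : ∀ j, c j ≠ ∞) (hfin : ∀ j, c j ≠ 0 → μ (A j) < ∞) :
    ∫ ω, ∏ j : Fin m, expNeg (c j * η ω (A j)) ∂P =
      ∏ j : Fin m, Real.exp (-((μ (A j)).toReal * (1 - Real.exp (-(c j).toReal)))) := by
  have hbase := hη.indep m A hA hdisj
  set g : Fin m → Ω → ℝ := fun j ω => expNeg (c j * η ω (A j)) with hg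
  have hgm : ∀ j, Measurable (g j) := fun j =>
    measurable_expNeg.comp ((hη.measurable_eval (A j) (hA j)).const_mul (c j))
  have hindep : iIndepFun g P := by
    have := iIndepFun.comp hbase (fun j (t : ℝ≥0∞) => expNeg (c j * t))
      (fun j => measurable_expNeg.comp (measurable_id.const_mul (c j)))
    exact this
  rw [integral_finset_prod_of_iIndep hindep hgm]
  exact Finset.prod_congr rfl fun j _ =>
    integral_expNeg_single hη (hA j) (hc j) (hfin j)

/-- For any `ℝ≥0∞`-simple function, `ω ↦ ∫⁻ φ d(η ω)` is measurable. -/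
lemma measurable_lintegral_simple (hη : IsPoissonProcess P η μ)
    (φ : SimpleFunc X ℝ≥0∞) :
    Measurable fun ω => ∫⁻ x, φ x ∂(η ω) := by
  have : (fun ω => ∫⁻ x, φ x ∂(η ω)) =
      fun ω => ∑ t ∈ φ.range, t * η ω (φ ⁻¹' {t}) := by
    funext ω
    rw [φ.lintegral_eq_lintegral (η ω)]
    rfl
  rw [this]
  exact Finset.measurable_sum _ fun t _ =>
    (hη.measurable_eval _ (φ.measurableSet_fiber t)).const_mul t

/-- The Laplace functional of the Poisson process at a finite-valued simple function
supported in a set of finite intensity. -/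
lemma laplace_simple (hη : IsPoissonProcess P η μ) [IsProbabilityMeasure P]
    {B : Set X} (hB : MeasurableSet B) (hBfin : μ B < ∞)
    (φ : SimpleFunc X ℝ≥0∞) (hfin : ∀ x, φ x ≠ ∞) (hsupp : ∀ x ∉ B, φ x = 0) :
    ∫ ω, expNeg (∫⁻ x, φ x ∂(η ω)) ∂P =
      Real.exp (-(∫ x, (1 - Real.exp (-(φ x).toReal)) ∂μ)) := by
  classical
  set m := φ.range.card with hm
  set e : {t // t ∈ φ.range} ≃ Fin m := φ.range.equivFin with he
  set c : Fin m → ℝ≥0∞ := fun j => (e.symm j : ℝ≥0∞) with hcdef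
  set A : Fin m → Set X := fun j => φ ⁻¹' {c j} with hAdef
  have hA : ∀ j, MeasurableSet (A j) := fun j => φ.measurableSet_fiber _
  have hcinj : Function.Injective c := fun i j hij => by
    apply e.symm.injective; exact Subtype.ext hij
  have hdisj : Pairwise fun i j => Disjoint (A i) (A j) := by
    intro i j hij
    refine Set.disjoint_left.mpr fun x hx hx' => hij (hcinj ?_)
    rw [← Set.mem_singleton_iff.mp hx, ← Set.mem_singleton_iff.mp hx']
  have hc : ∀ j, c j ≠ ∞ := by
    intro j
    obtain ⟨x, hx⟩ := SimpleFunc.mem_range.mp (e.symm j).2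
    rw [hcdef]
    simp only []
    rw [← hx]
    exact hfin x
  have hAB : ∀ j, c j ≠ 0 → A j ⊆ B := by
    intro j hj x hx
    by_contra hxB
    exact hj ((Set.mem_singleton_iff.mp hx).symm.trans (hsupp x hxB))
  have hfinA : ∀ j, c j ≠ 0 → μ (A j) < ∞ := fun j hj =>
    lt_of_le_of_lt (measure_mono (hAB j hj)) hBfin
  -- the lintegral of φ against any measure as a finite sum
  have hlint : ∀ ν : Measure X, ∫⁻ x, φ x ∂ν = ∑ j : Fin m, c j * ν (A j) := by
    intro ν
    rw [φ.lintegral_eq_lintegral ν]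
    show ∑ t ∈ φ.range, t * ν (φ ⁻¹' {t}) = _
    rw [← Finset.sum_attach φ.range (fun t => t * ν (φ ⁻¹' {t})), ← Finset.univ_eq_attach]
    exact (Equiv.sum_comp e.symm
      (fun a : {t // t ∈ φ.range} => (a : ℝ≥0∞) * ν (φ ⁻¹' {(a : ℝ≥0∞)}))).symm
  -- rewrite the LHS
  have hLHS : ∫ ω, expNeg (∫⁻ x, φ x ∂(η ω)) ∂P =
      ∏ j : Fin m, Real.exp (-((μ (A j)).toReal * (1 - Real.exp (-(c j).toReal)))) := by
    rw [← integral_prod_expNeg hη hA hdisj hc hfinA]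
    refine integral_congr_ae (Filter.Eventually.of_forall fun ω => ?_)
    show expNeg (∫⁻ x, φ x ∂(η ω)) = ∏ j : Fin m, expNeg (c j * η ω (A j))
    rw [hlint (η ω), expNeg_sum]
  rw [hLHS, ← Real.exp_sum]
  congr 1
  have hsum_int : ∑ j : Fin m, (μ (A j)).toReal * (1 - Real.exp (-(c j).toReal)) =
      ∫ x, (1 - Real.exp (-(φ x).toReal)) ∂μ := by
    have hps : ∀ x : X, (1 - Real.exp (-(φ x).toReal)) =
        ∑ j : Fin m, (A j).indicator (fun _ => 1 - Real.exp (-(c j).toReal)) x := by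
      intro x
      have hmem : φ x ∈ φ.range := φ.mem_range_self x
      have hAval : ∀ j, A j = φ ⁻¹' {c j} := fun j => by rw [hAdef]
      have hcval : ∀ j : Fin m, c j = ((e.symm j : {t // t ∈ φ.range}) : ℝ≥0∞) :=
        fun j => by rw [hcdef]
      set j0 : Fin m := e ⟨φ x, hmem⟩ with hj0
      rw [Finset.sum_eq_single j0]
      · have hxA : x ∈ A j0 := by
          rw [hAval j0, Set.mem_preimage, Set.mem_singleton_iff, hcval j0, hj0,
            Equiv.symm_apply_apply]
        rw [Set.indicator_of_mem hxA, hcval j0, hj0, Equiv.symm_apply_apply]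
      · intro j _ hj
        refine Set.indicator_of_notMem (fun hxA => hj ?_) _
        rw [hAval j, Set.mem_preimage, Set.mem_singleton_iff] at hxA
        have hsub : e.symm j = ⟨φ x, hmem⟩ := by
          apply Subtype.ext
          rw [← hcval j]
          exact hxA.symm
        rw [hj0, ← hsub, Equiv.apply_symm_apply]
      · intro h; exact absurd (Finset.mem_univ j0) h
    rw [integral_congr_ae (Filter.Eventually.of_forall hps)]
    have hintj : ∀ j : Fin m,
        Integrable ((A j).indicator (fun _ => 1 - Real.exp (-(c j).toReal))) μ := by
      intro j
      by_cases hj : c j = 0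
      · have h0 : (A j).indicator (fun _ => 1 - Real.exp (-(c j).toReal)) =
            (fun _ => (0 : ℝ)) := by
          funext y
          simp [hj, Set.indicator_apply]
        rw [h0]
        exact integrable_zero _ _ _
      · rw [integrable_indicator_iff (hA j)]
        exact integrableOn_const (hfinA j hj).ne
    rw [integral_finset_sum _ fun j _ => hintj j]
    refine Finset.sum_congr rfl fun j _ => ?_
    rw [integral_indicator_const _ (hA j), smul_eq_mul, measureReal_def, mul_comm]
  rw [← hsum_int]
  exact Finset.sum_neg_distrib _

end Product


section Laplace

variable {P : Measure Ω} {η : Ω → Measure X} {μ : Measure X}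

/-- The Laplace functional of a Poisson process. -/
lemma laplace_functional (hη : IsPoissonProcess P η μ) [IsProbabilityMeasure P]
    {v : X → ℝ} (hvm : Measurable v) (hv0 : ∀ x, 0 ≤ v x)
    {C : ℝ} (hvC : ∀ x, v x ≤ C)
    {B : Set X} (hB : MeasurableSet B) (hBfin : μ B < ∞)
    (hsupp : ∀ x ∉ B, v x = 0) :
    ∫ ω, lapFun v (η ω) ∂P = Real.exp (-(∫ x, (1 - Real.exp (-(v x))) ∂μ)) := by
  classical
  set g : X → ℝ≥0∞ := fun x => ENNReal.ofReal (v x) with hgdef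
  have hg : Measurable g := hvm.ennreal_ofReal
  set φ : ℕ → SimpleFunc X ℝ≥0∞ := SimpleFunc.eapprox g with hφdef
  have hφ_le : ∀ k x, φ k x ≤ g x := by
    intro k x
    conv_rhs => rw [← SimpleFunc.iSup_eapprox_apply hg x]
    exact le_iSup (fun k => SimpleFunc.eapprox g k x) k
  have hφfin : ∀ k x, φ k x ≠ ∞ := fun k x => (SimpleFunc.eapprox_lt_top g k x).ne
  have hφsupp : ∀ k, ∀ x ∉ B, φ k x = 0 := by
    intro k x hx
    have := hφ_le k x
    rw [hgdef] at this
    simp only [hsupp x hx, ENNReal.ofReal_zero, le_zero_iff] at this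
    exact this
  have hgB : ∀ x, g x ≤ B.indicator (fun _ => ENNReal.ofReal C) x := by
    intro x
    by_cases hx : x ∈ B
    · rw [Set.indicator_of_mem hx]; exact ENNReal.ofReal_le_ofReal (hvC x)
    · rw [Set.indicator_of_notMem hx, hgdef]; simp [hsupp x hx]
  -- a.e. finiteness of ∫⁻ g dη
  have hae_fin : ∀ᵐ ω ∂P, ∫⁻ x, g x ∂(η ω) ≠ ∞ := by
    filter_upwards [ae_eval_lt_top hη hB hBfin] with ω hω
    have h1 : ∫⁻ x, g x ∂(η ω) ≤ ENNReal.ofReal C * η ω B := by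
      calc ∫⁻ x, g x ∂(η ω) ≤ ∫⁻ x, B.indicator (fun _ => ENNReal.ofReal C) x ∂(η ω) :=
            lintegral_mono hgB
        _ = ENNReal.ofReal C * η ω B := lintegral_indicator_const hB _
    exact (lt_of_le_of_lt h1 (ENNReal.mul_lt_top ENNReal.ofReal_lt_top hω)).ne
  -- the sequence of integrals and its convergence over Ω
  set F : ℕ → Ω → ℝ := fun k ω => expNeg (∫⁻ x, φ k x ∂(η ω)) with hFdef
  have hFmeas : ∀ k, Measurable (F k) := fun k =>
    measurable_expNeg.comp (measurable_lintegral_simple hη (φ k))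
  have hlim : ∀ᵐ ω ∂P, Filter.Tendsto (fun k => F k ω) Filter.atTop
      (𝓝 (lapFun v (η ω))) := by
    filter_upwards [hae_fin] with ω hS
    set a : ℕ → ℝ≥0∞ := fun k => ∫⁻ x, φ k x ∂(η ω) with hadef
    have hamono : Monotone a := fun i j hij =>
      lintegral_mono fun x => SimpleFunc.monotone_eapprox g hij x
    have hφmono : Monotone fun k => ⇑(φ k) := fun i j hij x =>
      SimpleFunc.monotone_eapprox g hij x
    have hsup : ⨆ k, a k = ∫⁻ x, g x ∂(η ω) := by
      show ⨆ k, ∫⁻ x, φ k x ∂(η ω) = _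
      rw [← lintegral_iSup (fun k => (φ k).measurable) hφmono]
      congr 1
      funext x
      exact SimpleFunc.iSup_eapprox_apply hg x
    have ht : Filter.Tendsto a Filter.atTop (𝓝 (∫⁻ x, g x ∂(η ω))) := by
      rw [← hsup]; exact tendsto_atTop_iSup hamono
    have hak_fin : ∀ k, a k ≠ ∞ := fun k =>
      (lt_of_le_of_lt (le_trans (le_iSup a k) hsup.le) (lt_top_iff_ne_top.mpr hS)).ne
    have h1 : Filter.Tendsto (fun k => (a k).toReal) Filter.atTop
        (𝓝 (∫⁻ x, g x ∂(η ω)).toReal) := (ENNReal.tendsto_toReal hS).comp ht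
    have h2 : Filter.Tendsto (fun k => Real.exp (-(a k).toReal)) Filter.atTop
        (𝓝 (Real.exp (-(∫⁻ x, g x ∂(η ω)).toReal))) :=
      (Real.continuous_exp.tendsto _).comp h1.neg
    have hfω : lapFun v (η ω) = Real.exp (-(∫⁻ x, g x ∂(η ω)).toReal) := by
      rw [lapFun_eq, expNeg_of_ne_top hS]
    rw [hfω]
    refine h2.congr fun k => ?_
    rw [hFdef]
    simp only []
    rw [expNeg_of_ne_top (hak_fin k)]
  have hDCT : Filter.Tendsto (fun k => ∫ ω, F k ω ∂P) Filter.atTop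
      (𝓝 (∫ ω, lapFun v (η ω) ∂P)) := by
    refine MeasureTheory.tendsto_integral_of_dominated_convergence (fun _ => (1 : ℝ))
      (fun k => (hFmeas k).aestronglyMeasurable) (integrable_const 1) ?_ hlim
    intro k
    exact Filter.Eventually.of_forall fun ω => by
      rw [Real.norm_eq_abs]; exact abs_expNeg_le_one _
  -- convergence of the μ-integrals
  set I : ℕ → ℝ := fun k => ∫ x, (1 - Real.exp (-(φ k x).toReal)) ∂μ with hIdef
  have hI : Filter.Tendsto I Filter.atTop (𝓝 (∫ x, (1 - Real.exp (-(v x))) ∂μ)) := by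
    refine MeasureTheory.tendsto_integral_of_dominated_convergence
      (B.indicator fun _ => (1 : ℝ))
      (fun k => ((measurable_const.sub (Real.continuous_exp.measurable.comp
        (φ k).measurable.ennreal_toReal.neg))).aestronglyMeasurable) ?_ ?_ ?_
    · rw [integrable_indicator_iff hB]
      exact integrableOn_const hBfin.ne
    · intro k
      refine Filter.Eventually.of_forall fun x => ?_
      by_cases hx : x ∈ B
      · rw [Set.indicator_of_mem hx, Real.norm_eq_abs, abs_le]
        constructor
        · have : Real.exp (-(φ k x).toReal) ≤ 1 :=
            Real.exp_le_one_iff.mpr (neg_nonpos.mpr ENNReal.toReal_nonneg)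
          linarith
        · have : (0:ℝ) < Real.exp (-(φ k x).toReal) := Real.exp_pos _
          linarith
      · rw [Set.indicator_of_notMem hx, hφsupp k x hx]
        simp
    · refine Filter.Eventually.of_forall fun x => ?_
      have hgx : g x ≠ ∞ := ENNReal.ofReal_ne_top
      have hmono : Monotone fun k => φ k x := fun i j hij =>
        SimpleFunc.monotone_eapprox g hij x
      have ht : Filter.Tendsto (fun k => φ k x) Filter.atTop (𝓝 (g x)) := by
        rw [← SimpleFunc.iSup_eapprox_apply hg x]
        exact tendsto_atTop_iSup hmono
      have h1 : Filter.Tendsto (fun k => (φ k x).toReal) Filter.atTop (𝓝 (v x)) := by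
        have := (ENNReal.tendsto_toReal hgx).comp ht
        rwa [hgdef, ENNReal.toReal_ofReal (hv0 x)] at this
      have := ((Real.continuous_exp.tendsto _).comp h1.neg).const_sub 1
      exact this
  -- identify the limits
  have heq : ∀ k, ∫ ω, F k ω ∂P = Real.exp (-(I k)) := fun k =>
    laplace_simple hη hB hBfin (φ k) (fun x => hφfin k x) (fun x hx => hφsupp k x hx)
  have hI2 : Filter.Tendsto (fun k => Real.exp (-(I k))) Filter.atTop
      (𝓝 (Real.exp (-(∫ x, (1 - Real.exp (-(v x))) ∂μ)))) :=
    (Real.continuous_exp.tendsto _).comp hI.neg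
  exact tendsto_nhds_unique hDCT (hI2.congr fun k => (heq k).symm)
end Laplace


/-- For `f(χ) = exp(-χ(v))` with `v : X → [0,∞)` measurable, bounded
and vanishing outside a set of finite `μ`-measure,
`T_n f = exp(-μ(1-e^{-v})) ⋅ (e^{-v}-1)^{⊗n}`, i.e.
`E[D^n_{x₁,…,x_n} f(η)] = exp(-∫ (1-e^{-v}) dμ) ∏_{i=1}^n (e^{-v(x_i)} - 1)`. -/
theorem Tfun_exponential
    (P : Measure Ω) [IsProbabilityMeasure P]
    (η : Ω → Measure X) (μ : Measure X) [SigmaFinite μ]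
    (hη : IsPoissonProcess P η μ)
    (v : X → ℝ) (hvm : Measurable v) (hv0 : ∀ x, 0 ≤ v x)
    (C : ℝ) (hvC : ∀ x, v x ≤ C)
    (B : Set X) (hB : MeasurableSet B) (hBfin : μ B < ∞)
    (hsupp : ∀ x ∉ B, v x = 0)
    (n : ℕ) (x : Fin n → X) :
    Tfun P η n (lapFun v) x =
      Real.exp (-(∫ y, (1 - Real.exp (-(v y))) ∂μ)) *
        ∏ i : Fin n, (Real.exp (-(v (x i))) - 1) := by
  have h1 : Tfun P η n (lapFun v) x =
      ∫ ω, lapFun v (η ω) * ∏ i : Fin n, (Real.exp (-(v (x i))) - 1) ∂P := by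
    unfold Tfun
    refine integral_congr_ae (Filter.Eventually.of_forall fun ω => ?_)
    exact iterDiffOp_lapFun hvm hv0 n x (η ω)
  rw [h1, integral_mul_const, laplace_functional hη hvm hv0 hvC hB hBfin hsupp]

end PoissonSurvey
end
end

section
/- The set G of linear combinations of functions χ ↦ exp(-χ(v)), with v bounded measurable nonnegative and vanishing outside a set of finite μ-measure, is dense in L²(P_η), where P_η is the distribution of a Poisson process with σ-finite intensity measure μ. -/
open MeasureTheory ProbabilityTheory ENNReal Filter Topology

noncomputable section

namespace PoissonSurvey

variable {Ω X : Type*} [MeasurableSpace Ω] [MeasurableSpace X]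

/-- The class `G` of linear combinations of functions `χ ↦ exp(-χ(v))` with `v`
bounded, measurable, nonnegative and vanishing outside a set of finite `μ`-measure. -/
def expCombinations (μ : Measure X) : Set (Measure X → ℝ) :=
  {g | ∃ (n : ℕ) (a : Fin n → ℝ) (v : Fin n → X → ℝ),
    (∀ i, Measurable (v i)) ∧ (∀ i x, 0 ≤ v i x) ∧
    (∀ i, ∃ C, ∀ x, v i x ≤ C) ∧
    (∀ i, ∃ B, MeasurableSet B ∧ μ B < ∞ ∧ ∀ x ∉ B, v i x = 0) ∧
    g = fun χ => ∑ i, a i * lapFun (v i) χ}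

/-! ### Auxiliary machinery for the density theorem -/

section DensityAux

variable {μ : Measure X} {Q : Measure (Measure X)}

/-- `exp(-x)` on `ℝ≥0∞` with the convention `exp(-∞) = 0`. -/
def ee (x : ℝ≥0∞) : ℝ := if x = ∞ then 0 else Real.exp (-x.toReal)

lemma ee_nonneg (x : ℝ≥0∞) : 0 ≤ ee x := by
  unfold ee; split_ifs
  · exact le_rfl
  · exact (Real.exp_pos _).le

lemma ee_le_one (x : ℝ≥0∞) : ee x ≤ 1 := by
  unfold ee; split_ifs
  · exact zero_le_one
  · exact Real.exp_le_one_iff.mpr (neg_nonpos.mpr ENNReal.toReal_nonneg)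

lemma measurable_ee : Measurable ee := by
  unfold ee
  exact Measurable.ite (measurableSet_eq)
    measurable_const (Real.measurable_exp.comp ENNReal.measurable_toReal.neg)

lemma ee_add (a b : ℝ≥0∞) : ee (a + b) = ee a * ee b := by
  unfold ee
  rcases eq_or_ne a ∞ with ha | ha
  · simp [ha]
  rcases eq_or_ne b ∞ with hb | hb
  · simp [hb]
  rw [if_neg (by simp [ha, hb, ENNReal.add_eq_top]), if_neg ha, if_neg hb,
    ENNReal.toReal_add ha hb, neg_add, Real.exp_add]

lemma ee_le_ee_iff {t x : ℝ≥0∞} (ht : t ≠ ∞) :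
    Real.exp (-t.toReal) ≤ ee x ↔ x ≤ t := by
  unfold ee
  rcases eq_or_ne x ∞ with hx | hx
  · rw [if_pos hx]
    constructor
    · intro h; exact absurd h (not_le.mpr (Real.exp_pos _))
    · intro h; exact absurd (hx ▸ h) (fun h' => ht (top_le_iff.mp h'))
  · rw [if_neg hx, Real.exp_le_exp, neg_le_neg_iff]
    exact ENNReal.toReal_le_toReal hx ht

lemma lapFun_eq_ee (v : X → ℝ) (χ : Measure X) :
    lapFun v χ = ee (∫⁻ x, ENNReal.ofReal (v x) ∂χ) := rfl

lemma measurable_lapFun {v : X → ℝ} (hv : Measurable v) : Measurable (lapFun v) := by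
  have h : lapFun v = fun χ => ee (∫⁻ x, ENNReal.ofReal (v x) ∂χ) := rfl
  rw [h]
  exact measurable_ee.comp (Measure.measurable_lintegral hv.ennreal_ofReal)

lemma lapFun_zero (χ : Measure X) : lapFun (fun _ => (0:ℝ)) χ = 1 := by
  rw [lapFun_eq_ee]
  simp [ee]

lemma lapFun_mul_lapFun {v w : X → ℝ} (hv : Measurable v) (hv0 : ∀ x, 0 ≤ v x)
    (hw0 : ∀ x, 0 ≤ w x) (χ : Measure X) :
    lapFun v χ * lapFun w χ = lapFun (fun x => v x + w x) χ := by
  simp only [lapFun_eq_ee]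
  have h : (∫⁻ x, ENNReal.ofReal (v x + w x) ∂χ)
      = (∫⁻ x, ENNReal.ofReal (v x) ∂χ) + ∫⁻ x, ENNReal.ofReal (w x) ∂χ := by
    rw [← lintegral_add_left hv.ennreal_ofReal]
    exact lintegral_congr fun x => ENNReal.ofReal_add (hv0 x) (hw0 x)
  rw [h, ee_add]

lemma lapFun_indicator {B : Set X} (hB : MeasurableSet B) (χ : Measure X) :
    lapFun (B.indicator fun _ => (1:ℝ)) χ = ee (χ B) := by
  rw [lapFun_eq_ee]
  congr 1
  rw [← lintegral_indicator_one hB]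
  refine lintegral_congr fun x => ?_
  by_cases hx : x ∈ B <;> simp [hx]

/-! #### Closure properties of `expCombinations` -/

lemma mem_expCombinations_lapFun {v : X → ℝ} (hm : Measurable v)
    (h0 : ∀ x, 0 ≤ v x) (hb : ∃ C, ∀ x, v x ≤ C)
    (hs : ∃ B, MeasurableSet B ∧ μ B < ∞ ∧ ∀ x ∉ B, v x = 0) :
    (fun χ => lapFun v χ) ∈ expCombinations μ :=
  ⟨1, fun _ => 1, fun _ => v, fun _ => hm, fun _ => h0, fun _ => hb, fun _ => hs,
    by funext χ; rw [Fin.sum_univ_one, one_mul]⟩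

lemma mem_expCombinations_const (μ : Measure X) (c : ℝ) :
    (fun _ : Measure X => c) ∈ expCombinations μ :=
  ⟨1, fun _ => c, fun _ _ => 0, fun _ => measurable_const, fun _ _ => le_rfl,
    fun _ => ⟨0, fun _ => le_rfl⟩,
    fun _ => ⟨∅, MeasurableSet.empty, by simp, fun _ _ => rfl⟩,
    by funext χ; rw [Fin.sum_univ_one, lapFun_zero, mul_one]⟩

private lemma forall_append {α : Type*} {n₁ n₂ : ℕ} {u : Fin n₁ → α} {v : Fin n₂ → α}
    {p : α → Prop} (h₁ : ∀ i, p (u i)) (h₂ : ∀ i, p (v i)) :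
    ∀ i, p (Fin.append u v i) := fun i =>
  Fin.addCases (fun j => by rw [Fin.append_left]; exact h₁ j)
    (fun j => by rw [Fin.append_right]; exact h₂ j) i

lemma mem_expCombinations_add {g h : Measure X → ℝ}
    (hg : g ∈ expCombinations μ) (hh : h ∈ expCombinations μ) :
    (fun χ => g χ + h χ) ∈ expCombinations μ := by
  obtain ⟨n₁, a₁, v₁, hm₁, h0₁, hb₁, hs₁, rfl⟩ := hg
  obtain ⟨n₂, a₂, v₂, hm₂, h0₂, hb₂, hs₂, rfl⟩ := hh
  refine ⟨n₁ + n₂, Fin.append a₁ a₂, Fin.append v₁ v₂,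
    forall_append (p := fun w : X → ℝ => Measurable w) hm₁ hm₂,
    forall_append (p := fun w : X → ℝ => ∀ x, 0 ≤ w x) h0₁ h0₂,
    forall_append (p := fun w : X → ℝ => ∃ C, ∀ x, w x ≤ C) hb₁ hb₂,
    forall_append (p := fun w : X → ℝ => ∃ B, MeasurableSet B ∧ μ B < ∞ ∧ ∀ x ∉ B, w x = 0) hs₁ hs₂,
    ?_⟩
  funext χ
  rw [Fin.sum_univ_add]
  simp [Fin.append_left, Fin.append_right]

lemma mem_expCombinations_smul {g : Measure X → ℝ} (c : ℝ) (hg : g ∈ expCombinations μ) :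
    (fun χ => c * g χ) ∈ expCombinations μ := by
  obtain ⟨n, a, v, hm, h0, hb, hs, rfl⟩ := hg
  exact ⟨n, fun i => c * a i, v, hm, h0, hb, hs, by
    funext χ; rw [Finset.mul_sum]; exact Finset.sum_congr rfl fun i _ => by ring⟩

lemma mem_expCombinations_sub {g h : Measure X → ℝ}
    (hg : g ∈ expCombinations μ) (hh : h ∈ expCombinations μ) :
    (fun χ => g χ - h χ) ∈ expCombinations μ := by
  have := mem_expCombinations_add hg (mem_expCombinations_smul (-1) hh)
  simpa [neg_one_mul, ← sub_eq_add_neg] using this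

lemma mem_expCombinations_mul {g h : Measure X → ℝ}
    (hg : g ∈ expCombinations μ) (hh : h ∈ expCombinations μ) :
    (fun χ => g χ * h χ) ∈ expCombinations μ := by
  obtain ⟨n₁, a₁, v₁, hm₁, h0₁, hb₁, hs₁, rfl⟩ := hg
  obtain ⟨n₂, a₂, v₂, hm₂, h0₂, hb₂, hs₂, rfl⟩ := hh
  refine ⟨n₁ * n₂,
    fun k => a₁ (finProdFinEquiv.symm k).1 * a₂ (finProdFinEquiv.symm k).2,
    fun k x => v₁ (finProdFinEquiv.symm k).1 x + v₂ (finProdFinEquiv.symm k).2 x,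
    fun k => (hm₁ _).add (hm₂ _),
    fun k x => add_nonneg (h0₁ _ x) (h0₂ _ x),
    fun k => ?_, fun k => ?_, ?_⟩
  · obtain ⟨C₁, hC₁⟩ := hb₁ (finProdFinEquiv.symm k).1
    obtain ⟨C₂, hC₂⟩ := hb₂ (finProdFinEquiv.symm k).2
    exact ⟨C₁ + C₂, fun x => add_le_add (hC₁ x) (hC₂ x)⟩
  · obtain ⟨B₁, hB₁, hB₁f, hB₁v⟩ := hs₁ (finProdFinEquiv.symm k).1
    obtain ⟨B₂, hB₂, hB₂f, hB₂v⟩ := hs₂ (finProdFinEquiv.symm k).2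
    refine ⟨B₁ ∪ B₂, hB₁.union hB₂, ?_, fun x hx => ?_⟩
    · exact (measure_union_le _ _).trans_lt (ENNReal.add_lt_top.mpr ⟨hB₁f, hB₂f⟩)
    · show v₁ (finProdFinEquiv.symm k).1 x + v₂ (finProdFinEquiv.symm k).2 x = 0
      rw [hB₁v x (fun h => hx (Set.mem_union_left _ h)),
        hB₂v x (fun h => hx (Set.mem_union_right _ h)), add_zero]
  · funext χ
    rw [Finset.sum_mul_sum]
    rw [← Equiv.sum_comp finProdFinEquiv
      (fun k => (a₁ (finProdFinEquiv.symm k).1 * a₂ (finProdFinEquiv.symm k).2) *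
        lapFun (fun x => v₁ (finProdFinEquiv.symm k).1 x + v₂ (finProdFinEquiv.symm k).2 x) χ)]
    rw [Fintype.sum_prod_type]
    refine Finset.sum_congr rfl fun i _ => Finset.sum_congr rfl fun j _ => ?_
    simp only [Equiv.symm_apply_apply]
    rw [mul_mul_mul_comm, lapFun_mul_lapFun (hm₁ i) (h0₁ i) (h0₂ j)]

lemma measurable_of_mem_expCombinations {g : Measure X → ℝ}
    (hg : g ∈ expCombinations μ) : Measurable g := by
  obtain ⟨n, a, v, hm, -, -, -, rfl⟩ := hg
  exact Finset.measurable_sum _ fun i _ => measurable_const.mul (measurable_lapFun (hm i))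

/-! #### Cylinder sets generate the evaluation σ-algebra -/

/-- The π-system of finite intersections of sets `{χ | χ B ≤ t}` with `μ B < ∞`, `t < ∞`. -/
def cylSets (μ : Measure X) : Set (Set (Measure X)) :=
  {S | ∃ (k : ℕ) (B : Fin k → Set X) (t : Fin k → ℝ≥0∞),
    (∀ i, MeasurableSet (B i)) ∧ (∀ i, μ (B i) < ∞) ∧ (∀ i, t i ≠ ∞) ∧
    S = ⋂ i, {χ : Measure X | χ (B i) ≤ t i}}

lemma isPiSystem_cylSets (μ : Measure X) : IsPiSystem (cylSets μ) := by
  rintro S₁ ⟨k₁, B₁, t₁, hB₁, hf₁, ht₁, rfl⟩ S₂ ⟨k₂, B₂, t₂, hB₂, hf₂, ht₂, rfl⟩ -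
  refine ⟨k₁ + k₂, Fin.append B₁ B₂, Fin.append t₁ t₂,
    forall_append (p := fun s : Set X => MeasurableSet s) hB₁ hB₂,
    forall_append (p := fun s : Set X => μ s < ∞) hf₁ hf₂,
    forall_append (p := fun x : ℝ≥0∞ => x ≠ ∞) ht₁ ht₂, ?_⟩
  ext χ
  simp only [Set.mem_inter_iff, Set.mem_iInter, Set.mem_setOf_eq]
  constructor
  · rintro ⟨hl, hr⟩ i
    refine Fin.addCases (fun j => ?_) (fun j => ?_) i
    · rw [Fin.append_left, Fin.append_left]; exact hl j
    · rw [Fin.append_right, Fin.append_right]; exact hr j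
  · intro hall
    constructor
    · intro j; have := hall (Fin.castAdd k₂ j)
      rwa [Fin.append_left, Fin.append_left] at this
    · intro j; have := hall (Fin.natAdd k₁ j)
      rwa [Fin.append_right, Fin.append_right] at this

lemma generateFrom_cylSets (μ : Measure X) [SigmaFinite μ] :
    (inferInstance : MeasurableSpace (Measure X)) = MeasurableSpace.generateFrom (cylSets μ) := by
  refine le_antisymm ?_ (MeasurableSpace.generateFrom_le ?_)
  · have key : ∀ s : Set X, MeasurableSet s → μ s < ∞ →
        @Measurable (Measure X) ℝ≥0∞ (MeasurableSpace.generateFrom (cylSets μ)) _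
          (fun χ => χ s) := by
      intro s hs hfin
      apply measurable_of_Iic
      intro t
      rcases eq_or_ne t ∞ with rfl | ht
      · have h : (fun χ : Measure X => χ s) ⁻¹' Set.Iic ∞ = Set.univ := by
          ext χ; simp
        rw [h]; exact MeasurableSet.univ
      · refine MeasurableSpace.measurableSet_generateFrom
          (⟨1, fun _ => s, fun _ => t, fun _ => hs, fun _ => hfin, fun _ => ht, ?_⟩ :
            _ ∈ cylSets μ)
        ext χ; simp [Fin.forall_fin_one]
    have key2 : ∀ s : Set X, MeasurableSet s →
        @Measurable (Measure X) ℝ≥0∞ (MeasurableSpace.generateFrom (cylSets μ)) _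
          (fun χ => χ s) := by
      intro s hs
      have heq : (fun χ : Measure X => χ s) = fun χ => ⨆ n, χ (s ∩ spanningSets μ n) := by
        funext χ
        rw [← Monotone.measure_iUnion
            (fun a b hab => Set.inter_subset_inter_right s (monotone_spanningSets μ hab)),
          ← Set.inter_iUnion, iUnion_spanningSets, Set.inter_univ]
      rw [heq]
      exact Measurable.iSup fun n => key _ (hs.inter (measurableSet_spanningSets μ n))
        ((measure_mono Set.inter_subset_right).trans_lt (measure_spanningSets_lt_top μ n))
    have hid : @Measurable (Measure X) (Measure X)
        (MeasurableSpace.generateFrom (cylSets μ)) _ id :=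
      @Measure.measurable_of_measurable_coe X (Measure X) _
        (MeasurableSpace.generateFrom (cylSets μ)) id fun s hs => key2 s hs
    intro t ht
    simpa using hid ht
  · rintro S ⟨k, B, t, hB, -, -, rfl⟩
    exact MeasurableSet.iInter fun i => Measure.measurable_coe (hB i) measurableSet_Iic

/-! #### The approximation predicate and its closure properties -/

/-- `f` can be approximated in `L²(Q)` by elements of `expCombinations μ`. -/
def Approx (μ : Measure X) (Q : Measure (Measure X)) (f : Measure X → ℝ) : Prop :=
  ∀ ε : ℝ, 0 < ε → ∃ g ∈ expCombinations μ,
    eLpNorm (fun χ => f χ - g χ) 2 Q < ENNReal.ofReal ε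

lemma eLpNorm_le_ofReal [IsProbabilityMeasure Q]
    {f : Measure X → ℝ} {C : ℝ} (h : ∀ χ, ‖f χ‖ ≤ C) :
    eLpNorm f 2 Q ≤ ENNReal.ofReal C := by
  have := eLpNorm_le_of_ae_bound (μ := Q) (p := 2) (f := f) (Filter.Eventually.of_forall h)
  simpa [measure_univ] using this

lemma tendsto_eLpNorm_sub_zero [IsProbabilityMeasure Q]
    {f : Measure X → ℝ} {F : ℕ → Measure X → ℝ}
    (hfm : Measurable f) (hFm : ∀ n, Measurable (F n))
    (hbd : ∀ n χ, ‖f χ - F n χ‖ ≤ 1)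
    (hlim : ∀ χ, Tendsto (fun n => F n χ) atTop (𝓝 (f χ))) :
    Tendsto (fun n => eLpNorm (fun χ => f χ - F n χ) 2 Q) atTop (𝓝 0) := by
  have hI : Tendsto (fun n => ∫⁻ χ, (‖f χ - F n χ‖₊ : ℝ≥0∞) ^ (2:ℝ) ∂Q) atTop (𝓝 0) := by
    have h0 : (0:ℝ≥0∞) = ∫⁻ (_ : Measure X), (0:ℝ≥0∞) ∂Q := by simp
    rw [h0]
    refine tendsto_lintegral_of_dominated_convergence (fun _ => 1)
      (fun n => ((hfm.sub (hFm n)).nnnorm.coe_nnreal_ennreal).pow_const _) (fun n => ae_of_all _ fun χ => ?_)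
      (by simp) (ae_of_all _ fun χ => ?_)
    · have hle : (‖f χ - F n χ‖₊ : ℝ≥0∞) ≤ 1 := by
        rw [← enorm_eq_nnnorm, ← ofReal_norm, ← ENNReal.ofReal_one]
        exact ENNReal.ofReal_le_ofReal (hbd n χ)
      exact ENNReal.rpow_le_one hle (by norm_num)
    · have h1 : Tendsto (fun n => ‖f χ - F n χ‖) atTop (𝓝 0) := by
        have := ((tendsto_const_nhds (x := f χ) (f := atTop)).sub (hlim χ)).norm
        simpa using this
      have h2 : Tendsto (fun n => ENNReal.ofReal ‖f χ - F n χ‖) atTop (𝓝 0) := by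
        simpa [Function.comp_def] using (ENNReal.continuous_ofReal.tendsto 0).comp h1
      have h3 := ((ENNReal.continuous_rpow_const (y := 2)).tendsto 0).comp h2
      simp only [Function.comp_def] at h3
      rw [ENNReal.zero_rpow_of_pos (by norm_num)] at h3
      exact h3.congr fun n => by rw [ofReal_norm, enorm_eq_nnnorm]
  have hform : ∀ n, eLpNorm (fun χ => f χ - F n χ) 2 Q
      = (∫⁻ χ, (‖f χ - F n χ‖₊ : ℝ≥0∞) ^ (2:ℝ) ∂Q) ^ (1/(2:ℝ)) := by
    intro n
    rw [eLpNorm_eq_lintegral_rpow_enorm_toReal (by norm_num) (by norm_num)]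
    norm_num
    simp only [enorm_eq_nnnorm]
  have h4 := ((ENNReal.continuous_rpow_const (y := 1/2)).tendsto 0).comp hI
  simp only [Function.comp_def] at h4
  rw [ENNReal.zero_rpow_of_pos (by norm_num)] at h4
  exact h4.congr fun n => (hform n).symm

lemma Approx.of_mem {g : Measure X → ℝ} (hg : g ∈ expCombinations μ) : Approx μ Q g := by
  intro ε hε
  refine ⟨g, hg, ?_⟩
  have h : (fun χ => g χ - g χ) = (fun _ : Measure X => (0:ℝ)) := by funext χ; ring
  rw [h]
  simpa using ENNReal.ofReal_pos.mpr hε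

lemma Approx.add {f g : Measure X → ℝ} (hfm : Measurable f) (hgm : Measurable g)
    (hf : Approx μ Q f) (hg : Approx μ Q g) : Approx μ Q (fun χ => f χ + g χ) := by
  intro ε hε
  obtain ⟨p, hp, hp2⟩ := hf (ε/2) (half_pos hε)
  obtain ⟨q, hq, hq2⟩ := hg (ε/2) (half_pos hε)
  refine ⟨fun χ => p χ + q χ, mem_expCombinations_add hp hq, ?_⟩
  have heq : (fun χ => (f χ + g χ) - (p χ + q χ))
      = (fun χ => f χ - p χ) + fun χ => g χ - q χ := by
    funext χ; simp only [Pi.add_apply]; ring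
  rw [heq]
  refine lt_of_le_of_lt (eLpNorm_add_le
    ((hfm.sub (measurable_of_mem_expCombinations hp)).aestronglyMeasurable)
    ((hgm.sub (measurable_of_mem_expCombinations hq)).aestronglyMeasurable)
    (by norm_num)) ?_
  calc eLpNorm (fun χ => f χ - p χ) 2 Q + eLpNorm (fun χ => g χ - q χ) 2 Q
      < ENNReal.ofReal (ε/2) + ENNReal.ofReal (ε/2) := ENNReal.add_lt_add hp2 hq2
    _ = ENNReal.ofReal ε := by
        rw [← ENNReal.ofReal_add (half_pos hε).le (half_pos hε).le, add_halves]

lemma Approx.smul {f : Measure X → ℝ} (c : ℝ) (hf : Approx μ Q f) :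
    Approx μ Q (fun χ => c * f χ) := by
  intro ε hε
  have hδ : 0 < ε / (|c| + 1) := by positivity
  obtain ⟨p, hp, hp2⟩ := hf _ hδ
  refine ⟨fun χ => c * p χ, mem_expCombinations_smul c hp, ?_⟩
  have heq : (fun χ => c * f χ - c * p χ) = c • fun χ => f χ - p χ := by
    funext χ; simp only [Pi.smul_apply, smul_eq_mul]; ring
  rw [heq, eLpNorm_const_smul]
  calc (‖c‖₊ : ℝ≥0∞) * eLpNorm (fun χ => f χ - p χ) 2 Q
      ≤ (‖c‖₊ : ℝ≥0∞) * ENNReal.ofReal (ε / (|c| + 1)) := mul_le_mul_right hp2.le _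
    _ = ENNReal.ofReal (|c| * (ε / (|c| + 1))) := by
        rw [ENNReal.ofReal_mul (abs_nonneg c)]
        congr 1
        rw [← enorm_eq_nnnorm, ← ofReal_norm, Real.norm_eq_abs]
    _ < ENNReal.ofReal ε := by
        rw [ENNReal.ofReal_lt_ofReal_iff hε]
        have h1 : |c| * (ε / (|c|+1)) < (|c|+1) * (ε/(|c|+1)) :=
          mul_lt_mul_of_pos_right (lt_add_one _) hδ
        rwa [mul_div_cancel₀ _ (by positivity : (|c|:ℝ)+1 ≠ 0)] at h1

lemma Approx.of_tendsto [IsProbabilityMeasure Q]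
    {f : Measure X → ℝ} {F : ℕ → Measure X → ℝ}
    (hfm : Measurable f) (hFm : ∀ n, Measurable (F n))
    (hbd : ∀ n χ, ‖f χ - F n χ‖ ≤ 1)
    (hlim : ∀ χ, Tendsto (fun n => F n χ) atTop (𝓝 (f χ)))
    (hFa : ∀ n, Approx μ Q (F n)) : Approx μ Q f := by
  intro ε hε
  obtain ⟨n, hn⟩ := ((tendsto_eLpNorm_sub_zero (Q := Q) hfm hFm hbd hlim).eventually_lt_const
    (ENNReal.ofReal_pos.mpr (half_pos hε))).exists
  obtain ⟨g, hg, hg2⟩ := hFa n (ε/2) (half_pos hε)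
  refine ⟨g, hg, ?_⟩
  have heq : (fun χ => f χ - g χ) = (fun χ => f χ - F n χ) + fun χ => F n χ - g χ := by
    funext χ; simp only [Pi.add_apply]; ring
  rw [heq]
  refine lt_of_le_of_lt (eLpNorm_add_le (hfm.sub (hFm n)).aestronglyMeasurable
    ((hFm n).sub (measurable_of_mem_expCombinations hg)).aestronglyMeasurable
    (by norm_num)) ?_
  calc eLpNorm (fun χ => f χ - F n χ) 2 Q + eLpNorm (fun χ => F n χ - g χ) 2 Q
      < ENNReal.ofReal (ε/2) + ENNReal.ofReal (ε/2) := ENNReal.add_lt_add hn hg2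
    _ = ENNReal.ofReal ε := by
        rw [← ENNReal.ofReal_add (half_pos hε).le (half_pos hε).le, add_halves]

/-! #### Cut-off functions -/

/-- A continuous piecewise-linear function which is `0` below `σ - 1/n` and `1` above `σ`. -/
def cutFun (σ : ℝ) (n : ℕ) (u : ℝ) : ℝ := max 0 (min 1 (1 + n * (u - σ)))

lemma cutFun_continuous (σ : ℝ) (n : ℕ) : Continuous (cutFun σ n) := by
  unfold cutFun
  fun_prop

lemma cutFun_nonneg {σ : ℝ} {n : ℕ} {u : ℝ} : 0 ≤ cutFun σ n u := le_max_left _ _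

lemma cutFun_le_one {σ : ℝ} {n : ℕ} {u : ℝ} : cutFun σ n u ≤ 1 :=
  max_le zero_le_one (min_le_left _ _)

lemma cutFun_eq_one {σ u : ℝ} (n : ℕ) (h : σ ≤ u) : cutFun σ n u = 1 := by
  unfold cutFun
  have h1 : (1:ℝ) ≤ 1 + n * (u - σ) :=
    le_add_of_nonneg_right (mul_nonneg (Nat.cast_nonneg n) (sub_nonneg.mpr h))
  rw [min_eq_left h1, max_eq_right zero_le_one]

lemma cutFun_eventually_zero {σ u : ℝ} (h : u < σ) :
    ∀ᶠ n : ℕ in atTop, cutFun σ n u = 0 := by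
  have hpos : 0 < σ - u := sub_pos.mpr h
  filter_upwards [Filter.eventually_ge_atTop ⌈1/(σ-u)⌉₊] with n hn
  unfold cutFun
  have h1 : 1/(σ-u) ≤ (n:ℝ) := le_trans (Nat.le_ceil _) (Nat.cast_le.mpr hn)
  have h2 : 1 ≤ (n:ℝ) * (σ - u) := by
    rw [div_le_iff₀ hpos] at h1; linarith
  have h3 : min 1 (1 + (n:ℝ) * (u - σ)) ≤ 0 := (min_le_right _ _).trans (by nlinarith)
  rw [max_eq_left h3]

/-! #### Approximation of indicators of cylinder sets -/

lemma approx_indicator_cyl [SigmaFinite μ] [IsProbabilityMeasure Q]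
    {S : Set (Measure X)} (hS : S ∈ cylSets μ) :
    Approx μ Q (S.indicator fun _ => (1:ℝ)) := by
  obtain ⟨k, B, t, hB, hBf, htne, rfl⟩ := hS
  set s : Fin k → ℝ := fun i => Real.exp (-(t i).toReal) with hs_def
  set E : Fin k → Measure X → ℝ := fun i χ => ee (χ (B i)) with hE_def
  have hEmeas : ∀ i, Measurable (E i) := fun i =>
    measurable_ee.comp (Measure.measurable_coe (hB i))
  have hEmem : ∀ i, E i ∈ expCombinations μ := by
    intro i
    have h : E i = fun χ => lapFun ((B i).indicator fun _ => (1:ℝ)) χ := by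
      funext χ; rw [lapFun_indicator (hB i)]
    rw [h]
    refine mem_expCombinations_lapFun (measurable_const.indicator (hB i))
      (fun x => Set.indicator_nonneg (fun _ _ => zero_le_one) x)
      ⟨1, fun x => ?_⟩ ⟨B i, hB i, hBf i, fun x hx => Set.indicator_of_notMem hx _⟩
    by_cases hx : x ∈ B i <;> simp [hx]
  have hErange : ∀ i χ, E i χ ∈ Set.Icc (0:ℝ) 1 := fun i χ => ⟨ee_nonneg _, ee_le_one _⟩
  set F : ℕ → Measure X → ℝ := fun n χ => ∏ i, cutFun (s i) n (E i χ) with hF_def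
  have hSmeas : MeasurableSet (⋂ i, {χ : Measure X | χ (B i) ≤ t i}) :=
    MeasurableSet.iInter fun i => Measure.measurable_coe (hB i) measurableSet_Iic
  have hmem_iff : ∀ χ : Measure X,
      χ ∈ (⋂ i, {χ : Measure X | χ (B i) ≤ t i}) ↔ ∀ i, s i ≤ E i χ := by
    intro χ
    rw [Set.mem_iInter]
    exact forall_congr' fun i => (ee_le_ee_iff (htne i)).symm
  refine Approx.of_tendsto (F := F) (measurable_const.indicator hSmeas) ?_ ?_ ?_ ?_
  · intro n
    exact Finset.measurable_prod _ fun i _ =>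
      (cutFun_continuous _ _).measurable.comp (hEmeas i)
  · intro n χ
    have hF0 : 0 ≤ F n χ := Finset.prod_nonneg fun i _ => cutFun_nonneg
    have hF1 : F n χ ≤ 1 :=
      Finset.prod_le_one (fun i _ => cutFun_nonneg) (fun i _ => cutFun_le_one)
    have hI0 : (0:ℝ) ≤ (⋂ i, {χ : Measure X | χ (B i) ≤ t i}).indicator (fun _ => (1:ℝ)) χ :=
      Set.indicator_nonneg (fun _ _ => zero_le_one) χ
    have hI1 : (⋂ i, {χ : Measure X | χ (B i) ≤ t i}).indicator (fun _ => (1:ℝ)) χ ≤ 1 := by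
      by_cases hχ : χ ∈ ⋂ i, {χ : Measure X | χ (B i) ≤ t i} <;> simp [hχ]
    rw [Real.norm_eq_abs, abs_le]
    constructor <;> linarith
  · intro χ
    by_cases hχ : χ ∈ ⋂ i, {χ : Measure X | χ (B i) ≤ t i}
    · have h1 : ∀ n, F n χ = 1 := fun n =>
        Finset.prod_eq_one fun i _ => cutFun_eq_one n ((hmem_iff χ).mp hχ i)
      rw [Set.indicator_of_mem hχ]
      simpa [h1] using (tendsto_const_nhds : Tendsto (fun _ : ℕ => (1:ℝ)) atTop (𝓝 1))
    · rw [Set.indicator_of_notMem hχ]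
      obtain ⟨i₀, hi₀⟩ : ∃ i, E i χ < s i := by
        by_contra hcon
        push_neg at hcon
        exact hχ ((hmem_iff χ).mpr fun i => hcon i)
      refine Tendsto.congr' ?_ tendsto_const_nhds
      filter_upwards [cutFun_eventually_zero hi₀] with n hn
      exact (Finset.prod_eq_zero (Finset.mem_univ i₀) hn).symm
  · intro n δ hδ
    set Y := Fin k → Set.Icc (0:ℝ) 1 with hY
    set coord : Fin k → C(Y, ℝ) := fun i =>
      ⟨fun y => (y i : ℝ), (continuous_subtype_val.comp (continuous_apply i))⟩ with hcoord
    set A := Algebra.adjoin ℝ (Set.range coord) with hA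
    have hsep : A.SeparatesPoints := by
      intro y z hyz
      obtain ⟨i, hi⟩ := Function.ne_iff.mp hyz
      exact ⟨⇑(coord i), ⟨coord i, Algebra.subset_adjoin ⟨i, rfl⟩, rfl⟩,
        fun h => hi (Subtype.ext h)⟩
    have hφcont : Continuous fun y : Y => ∏ i, cutFun (s i) n (y i : ℝ) :=
      continuous_finset_prod _ fun i _ =>
        (cutFun_continuous _ _).comp (continuous_subtype_val.comp (continuous_apply i))
    obtain ⟨g, hg⟩ := ContinuousMap.exists_mem_subalgebra_near_continuous_of_separatesPoints
      A hsep _ hφcont (δ/2) (half_pos hδ)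
    set Ept : Measure X → Y := fun χ i => ⟨E i χ, hErange i χ⟩ with hEpt
    have hgG : (fun χ => (g : C(Y, ℝ)) (Ept χ)) ∈ expCombinations μ := by
      obtain ⟨g, hgA⟩ := g
      refine Algebra.adjoin_induction (fun p hp => ?_) (fun r => ?_)
        (fun p q _ _ hp hq => ?_) (fun p q _ _ hp hq => ?_) hgA
      · obtain ⟨i, rfl⟩ := hp
        have h : (fun χ => (coord i) (Ept χ)) = E i := by funext χ; rfl
        rw [h]; exact hEmem i
      · have h : (fun χ => (algebraMap ℝ C(Y,ℝ) r) (Ept χ)) = fun _ => r := by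
          funext χ
          simp
        rw [h]; exact mem_expCombinations_const μ r
      · have h : (fun χ => (p + q) (Ept χ)) = fun χ => p (Ept χ) + q (Ept χ) := by
          funext χ; simp
        rw [h]; exact mem_expCombinations_add hp hq
      · have h : (fun χ => (p * q) (Ept χ)) = fun χ => p (Ept χ) * q (Ept χ) := by
          funext χ; simp
        rw [h]; exact mem_expCombinations_mul hp hq
    refine ⟨fun χ => (g : C(Y, ℝ)) (Ept χ), hgG, ?_⟩
    have hb2 : ∀ χ, ‖F n χ - (g : C(Y,ℝ)) (Ept χ)‖ ≤ δ/2 := by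
      intro χ
      rw [norm_sub_rev]
      exact (hg (Ept χ)).le
    exact lt_of_le_of_lt (eLpNorm_le_ofReal hb2)
      ((ENNReal.ofReal_lt_ofReal_iff hδ).mpr (half_lt_self hδ))

/-! #### Indicators of arbitrary measurable sets, simple functions, and `L²` functions -/

lemma approx_indicator [SigmaFinite μ] [IsProbabilityMeasure Q]
    {S : Set (Measure X)} (hS : MeasurableSet S) :
    Approx μ Q (S.indicator fun _ => (1:ℝ)) := by
  refine MeasurableSpace.induction_on_inter
    (C := fun S _ => Approx μ Q (S.indicator fun _ => (1:ℝ)))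
    (generateFrom_cylSets μ) (isPiSystem_cylSets μ) ?_ ?_ ?_ ?_ S hS
  · -- empty
    show Approx μ Q ((∅ : Set (Measure X)).indicator fun _ => (1:ℝ))
    have h : ((∅ : Set (Measure X)).indicator fun _ => (1:ℝ)) = fun _ => (0:ℝ) := by
      funext χ; simp
    rw [h]
    exact Approx.of_mem (mem_expCombinations_const μ 0)
  · exact fun S hS => approx_indicator_cyl hS
  · -- complement
    intro S hSm hS
    show Approx μ Q (Sᶜ.indicator fun _ => (1:ℝ))
    intro ε hε
    obtain ⟨g, hg, hg2⟩ := hS ε hε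
    refine ⟨fun χ => 1 - g χ,
      mem_expCombinations_sub (mem_expCombinations_const μ 1) hg, ?_⟩
    have heq : (fun χ => Sᶜ.indicator (fun _ => (1:ℝ)) χ - (1 - g χ))
        = fun χ => -(S.indicator (fun _ => (1:ℝ)) χ - g χ) := by
      funext χ
      by_cases hχ : χ ∈ S <;>
        simp [Set.indicator_apply, Set.mem_compl_iff, hχ]
    rw [heq]
    have h2 : (fun χ => -(S.indicator (fun _ => (1:ℝ)) χ - g χ))
        = -fun χ => S.indicator (fun _ => (1:ℝ)) χ - g χ := rfl
    rw [h2, eLpNorm_neg]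
    exact hg2
  · -- disjoint unions
    intro f hdisj hm h
    show Approx μ Q ((⋃ i, f i).indicator fun _ => (1:ℝ))
    classical
    set F : ℕ → Measure X → ℝ :=
      fun n χ => ∑ i ∈ Finset.range n, (f i).indicator (fun _ => (1:ℝ)) χ with hF
    have hFval : ∀ n χ, F n χ = if ∃ i ∈ Finset.range n, χ ∈ f i then 1 else 0 := by
      intro n χ
      split_ifs with hex
      · obtain ⟨i₀, hi₀n, hi₀⟩ := hex
        show (∑ i ∈ Finset.range n, (f i).indicator (fun _ => (1:ℝ)) χ) = 1
        rw [Finset.sum_eq_single_of_mem i₀ hi₀n]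
        · exact Set.indicator_of_mem hi₀ _
        · intro b hb hbne
          exact Set.indicator_of_notMem
            (fun hbmem => Set.disjoint_left.mp (hdisj hbne) hbmem hi₀) _
      · push_neg at hex
        show (∑ i ∈ Finset.range n, (f i).indicator (fun _ => (1:ℝ)) χ) = 0
        exact Finset.sum_eq_zero fun i hi => Set.indicator_of_notMem (hex i hi) _
    have hFmeas : ∀ n, Measurable (F n) := fun n =>
      Finset.measurable_sum _ fun i _ => measurable_const.indicator (hm i)
    refine Approx.of_tendsto (F := F)
      (measurable_const.indicator (MeasurableSet.iUnion hm)) hFmeas ?_ ?_ ?_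
    · intro n χ
      have hF0 : (0:ℝ) ≤ F n χ := by rw [hFval]; split_ifs <;> norm_num
      have hF1 : F n χ ≤ 1 := by rw [hFval]; split_ifs <;> norm_num
      have hI0 : (0:ℝ) ≤ (⋃ i, f i).indicator (fun _ => (1:ℝ)) χ :=
        Set.indicator_nonneg (fun _ _ => zero_le_one) χ
      have hI1 : (⋃ i, f i).indicator (fun _ => (1:ℝ)) χ ≤ 1 := by
        by_cases hχ : χ ∈ ⋃ i, f i <;> simp [hχ]
      rw [Real.norm_eq_abs, abs_le]
      constructor <;> linarith
    · intro χ
      by_cases hχ : χ ∈ ⋃ i, f i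
      · obtain ⟨i₀, hi₀⟩ := Set.mem_iUnion.mp hχ
        rw [Set.indicator_of_mem hχ]
        refine Tendsto.congr' ?_ tendsto_const_nhds
        filter_upwards [Filter.eventually_ge_atTop (i₀+1)] with n hn
        rw [hFval]
        rw [if_pos ⟨i₀, Finset.mem_range.mpr (by omega), hi₀⟩]
      · rw [Set.indicator_of_notMem hχ]
        have hχ' : ∀ i, χ ∉ f i := fun i hi => hχ (Set.mem_iUnion.mpr ⟨i, hi⟩)
        refine Tendsto.congr' ?_ tendsto_const_nhds
        filter_upwards with n
        rw [hFval, if_neg]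
        rintro ⟨i, -, hi⟩
        exact hχ' i hi
    · intro n
      induction n with
      | zero =>
          have h0 : F 0 = fun _ => (0:ℝ) := by
            funext χ
            show (∑ i ∈ Finset.range 0, (f i).indicator (fun _ => (1:ℝ)) χ) = 0
            simp
          rw [h0]
          exact Approx.of_mem (mem_expCombinations_const μ 0)
      | succ m ih =>
          have hsucc : F (m+1) = fun χ => F m χ + (f m).indicator (fun _ => (1:ℝ)) χ := by
            funext χ
            exact Finset.sum_range_succ _ _
          rw [hsucc]
          exact Approx.add (hFmeas m) (measurable_const.indicator (hm m)) ih (h m)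

lemma approx_simpleFunc [SigmaFinite μ] [IsProbabilityMeasure Q]
    (s : SimpleFunc (Measure X) ℝ) : Approx μ Q s := by
  refine MeasureTheory.SimpleFunc.induction ?_ ?_ s
  · intro c S hSm
    have h : ⇑(SimpleFunc.piecewise S hSm (SimpleFunc.const _ c) (SimpleFunc.const _ 0))
        = fun χ => c * S.indicator (fun _ => (1:ℝ)) χ := by
      funext χ
      by_cases hχ : χ ∈ S <;> simp [SimpleFunc.piecewise_apply, Set.indicator_apply, hχ]
    rw [h]
    exact Approx.smul c (approx_indicator hSm)
  · intro p q hdisj hp hq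
    have h : ⇑(p + q) = fun χ => p χ + q χ := by
      funext χ; simp
    rw [h]
    exact Approx.add p.measurable q.measurable hp hq

lemma approx_of_memLp [SigmaFinite μ] [IsProbabilityMeasure Q]
    {f : Measure X → ℝ} (hf : MemLp f 2 Q) : Approx μ Q f := by
  intro ε hε
  obtain ⟨s, hs, -⟩ := hf.exists_simpleFunc_eLpNorm_sub_lt (by norm_num)
    (ENNReal.ofReal_pos.mpr (half_pos hε)).ne'
  obtain ⟨g, hg, hg2⟩ := approx_simpleFunc (μ := μ) (Q := Q) s (ε/2) (half_pos hε)
  refine ⟨g, hg, ?_⟩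
  have heq : (fun χ => f χ - g χ) = (fun χ => f χ - s χ) + fun χ => s χ - g χ := by
    funext χ; simp only [Pi.add_apply]; ring
  rw [heq]
  refine lt_of_le_of_lt (eLpNorm_add_le
    (hf.1.sub s.stronglyMeasurable.aestronglyMeasurable)
    ((s.measurable.sub (measurable_of_mem_expCombinations hg)).aestronglyMeasurable)
    (by norm_num)) ?_
  have hs' : eLpNorm (fun χ => f χ - s χ) 2 Q < ENNReal.ofReal (ε/2) := hs
  calc eLpNorm (fun χ => f χ - s χ) 2 Q + eLpNorm (fun χ => s χ - g χ) 2 Q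
      < ENNReal.ofReal (ε/2) + ENNReal.ofReal (ε/2) := ENNReal.add_lt_add hs' hg2
    _ = ENNReal.ofReal ε := by
        rw [← ENNReal.ofReal_add (half_pos hε).le (half_pos hε).le, add_halves]

end DensityAux

/-- The set `G` is dense in `L²(P_η)`, where `P_η` is the
distribution of a Poisson process with σ-finite intensity measure `μ`. -/
theorem expCombinations_dense
    (P : Measure Ω) [IsProbabilityMeasure P]
    (η : Ω → Measure X) (hηm : Measurable η)
    (μ : Measure X) [SigmaFinite μ]
    (hη : IsPoissonProcess P η μ)
    (f : Measure X → ℝ) (hf : MemLp f 2 (P.map η))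
    (ε : ℝ) (hε : 0 < ε) :
    ∃ g ∈ expCombinations μ,
      eLpNorm (fun χ => f χ - g χ) 2 (P.map η) < ENNReal.ofReal ε := by
  have : IsProbabilityMeasure (P.map η) := Measure.isProbabilityMeasure_map hηm.aemeasurable
  exact approx_of_memLp hf ε hε

end PoissonSurvey
end
end
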